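/- arXiv:cs/0612119 — 6 statements merged into one kernel-verified Lean document; each statement's English description precedes it below -/
import Mathlib

section
/- Let D be a subring of ℂ with fraction field D'. Let A, B ∈ D[X] with B ≠ 0, deg A = d ≥ deg B = d−β, v(A) arbitrary and v(B) = α. Then there exist polynomials Q, R ∈ D'[X], uniquely determined, such that deg Q = α+β, deg R < d−(α+β), and A = Q·(B/X^α) + X^β·R. -/
/-!
Over the field `K = Frac D`, write `b = B / X^α`. Since `b(0) ≠ 0`, `X^β` and `b` are coprime, and
for coprime `a, b` every `f` is uniquely `q b + a r` with `deg r < deg b`: from `u a + v b = 1`,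
divide `f u` by `b` to get `r`; uniqueness holds because `b ∣ a (r - r')` forces `b ∣ r - r'`.
The degree of `q` is then forced: `deg (X^β r) < β + deg b ≤ deg f`, so `deg q = deg f - deg b`.
-/

open Polynomial

namespace Polynomial

section CommRing

variable {R : Type*} [CommRing R]

theorem X_pow_natTrailingDegree_mul_divByMonic (p : R[X]) :
    X ^ p.natTrailingDegree * (p /ₘ X ^ p.natTrailingDegree) = p := by
  simpa [rootMultiplicity_eq_natTrailingDegree'] using pow_mul_divByMonic_rootMultiplicity_eq p 0

theorem coeff_zero_divByMonic_X_pow_natTrailingDegree (p : R[X]) :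
    (p /ₘ X ^ p.natTrailingDegree).coeff 0 = p.trailingCoeff := by
  have h := congrArg (coeff · p.natTrailingDegree) (X_pow_natTrailingDegree_mul_divByMonic p)
  simpa [trailingCoeff, coeff_X_pow_mul'] using h

end CommRing

section Field

variable {K : Type*} [Field K]

theorem isCoprime_X_pow_of_coeff_zero_ne_zero {b : K[X]} (hb : b.coeff 0 ≠ 0) (n : ℕ) :
    IsCoprime (X ^ n) b :=
  (irreducible_X.coprime_iff_not_dvd.mpr (X_dvd_iff.not.mpr hb)).pow_left

theorem eq_and_eq_of_mul_add_mul_eq {a b q r q' r' : K[X]} (hab : IsCoprime a b)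
    (hr : r.degree < b.degree) (hr' : r'.degree < b.degree)
    (h : q * b + a * r = q' * b + a * r') : q = q' ∧ r = r' := by
  have hdvd : b ∣ r - r' := hab.symm.dvd_of_dvd_mul_left ⟨q' - q, by linear_combination h⟩
  have hrr' : r = r' :=
    sub_eq_zero.mp (eq_zero_of_dvd_of_degree_lt hdvd ((degree_sub_le r r').trans_lt (max_lt hr hr')))
  subst hrr'
  exact ⟨mul_right_cancel₀ (ne_zero_of_degree_gt hr) (add_right_cancel h), rfl⟩

theorem existsUnique_eq_mul_add_mul_of_isCoprime {a b : K[X]} (hab : IsCoprime a b) (hb : b ≠ 0)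
    (f : K[X]) : ∃! qr : K[X] × K[X], qr.2.degree < b.degree ∧ f = qr.1 * b + a * qr.2 := by
  obtain ⟨u, v, huv⟩ := id hab
  have hdiv := EuclideanDomain.div_add_mod (f * u) b
  set q := f * u / b
  set r := f * u % b
  have hf : f = (q * a + f * v) * b + a * r := by linear_combination (-f) * huv - a * hdiv
  refine ⟨(q * a + f * v, r), ⟨EuclideanDomain.mod_lt _ hb, hf⟩, fun qr ⟨hr', hf'⟩ => ?_⟩
  obtain ⟨hq, hr⟩ :=
    eq_and_eq_of_mul_add_mul_eq hab hr' (EuclideanDomain.mod_lt _ hb) (hf'.symm.trans hf)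
  exact Prod.ext hq hr

theorem degree_add_degree_eq_of_eq_mul_add_mul {a b f q r : K[X]} (ha : a ≠ 0)
    (h : f = q * b + a * r) (hr : r.degree < b.degree) (hf : a.degree + b.degree ≤ f.degree) :
    q.degree + b.degree = f.degree := by
  have har : (a * r).degree < f.degree := by
    refine lt_of_lt_of_le ?_ hf
    rw [degree_mul, degree_eq_natDegree ha]
    exact WithBot.add_lt_add_left WithBot.coe_ne_bot hr
  rw [← degree_mul, eq_sub_of_add_eq h.symm, degree_sub_eq_left_of_degree_lt har]

theorem existsUnique_eq_mul_add_X_pow_mul_of_degree_eq {f b : K[X]} {β m n : ℕ}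
    (hb0 : b.coeff 0 ≠ 0) (hb : b.degree = m) (hf : f.degree = ↑(n + m)) (hβn : β ≤ n) :
    ∃! qr : K[X] × K[X], qr.1.degree = n ∧ qr.2.degree < m ∧ f = qr.1 * b + X ^ β * qr.2 := by
  have hb_ne : b ≠ 0 := by rintro rfl; simp at hb0
  refine (existsUnique_congr fun qr => ?_).mpr <| existsUnique_eq_mul_add_mul_of_isCoprime
    (isCoprime_X_pow_of_coeff_zero_ne_zero hb0 β) hb_ne f
  rw [hb]
  refine ⟨fun h => h.2, fun ⟨hr, hqr⟩ => ⟨?_, hr, hqr⟩⟩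
  have hdeg := degree_add_degree_eq_of_eq_mul_add_mul (pow_ne_zero β X_ne_zero) hqr (hb ▸ hr)
    (by rw [degree_X_pow, hb, hf]; exact_mod_cast Nat.add_le_add_right hβn m)
  rw [hb, hf, Nat.cast_add] at hdeg
  exact WithBot.add_right_cancel WithBot.coe_ne_bot hdeg

end Field

end Polynomial

/-- Symmetric division: for `A, B ∈ D[X]` with `B ≠ 0`, `deg A = d ≥ deg B = d - β` and
`v(B) = α`, there exist unique `Q, R` over the fraction field `D'` of `D` with
`deg Q = α + β`, `deg R < d - (α+β)` and `A = Q·(B/X^α) + X^β·R`. -/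
theorem symmetric_division (D : Subring ℂ) (A B : Polynomial D) (d α β : ℕ)
    (hB : B ≠ 0) (hAdeg : A.degree = (d : ℕ)) (hβd : β ≤ d)
    (hBdeg : B.degree = ((d - β : ℕ) : WithBot ℕ))
    (hBval : B.natTrailingDegree = α) :
    ∃! QR : Polynomial (FractionRing D) × Polynomial (FractionRing D),
      QR.1.degree = ((α + β : ℕ) : WithBot ℕ) ∧
      QR.2.degree < ((d - (α + β) : ℕ) : WithBot ℕ) ∧
      A.map (algebraMap D (FractionRing D)) =
        QR.1 * (B.map (algebraMap D (FractionRing D)) /ₘ X ^ α) + X ^ β * QR.2 := by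
  set φ := algebraMap D (FractionRing D)
  have hφ : Function.Injective φ := IsFractionRing.injective D (FractionRing D)
  have hb_map : B.map φ /ₘ X ^ α = (B /ₘ X ^ α).map φ := by
    rw [map_divByMonic φ (monic_X_pow α), Polynomial.map_pow, map_X]
  have hb0 : (B.map φ /ₘ X ^ α).coeff 0 ≠ 0 := by
    rw [hb_map, coeff_map, ← hBval, coeff_zero_divByMonic_X_pow_natTrailingDegree]
    exact (map_ne_zero_iff φ hφ).mpr (trailingCoeff_nonzero_iff_nonzero.mpr hB)
  have hBnat : B.natDegree = d - β := natDegree_eq_of_degree_eq_some hBdeg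
  have hαB : α ≤ d - β := hBval ▸ hBnat ▸ natTrailingDegree_le_natDegree B
  refine existsUnique_eq_mul_add_X_pow_mul_of_degree_eq hb0 ?_ ?_ (Nat.le_add_left β α)
  · rw [degree_eq_natDegree (by rintro h; simp [h] at hb0), hb_map,
      natDegree_map_eq_of_injective hφ, natDegree_divByMonic _ (monic_X_pow α), natDegree_X_pow,
      hBnat, Nat.sub_sub, add_comm]
  · rw [degree_map_eq_of_injective hφ, hAdeg]
    congr
    omega
end

section
/- Let A, B ∈ D[X] have degree d and valuation 0, let (S_i)_{−1 ≤ i ≤ d} be their sequence of symmetric subresultants, and suppose the pair (S_j, S_{j+1}) is (α,β)-defective with α > 0 and β > 1. Then S_{j+k} = 0 for every k = 2, …, α+β−1. -/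
open Polynomial

/-- The `2j × 2j` square submatrix `Sylv_{j,ℓ}(A,B)` of the Sylvester-type matrix of `A` and `B`
(of formal degree `d`): rows are the coefficient vectors of `A, XA, …, X^{j-1}A, B, …, X^{j-1}B`,
keeping the columns of degrees `0, …, j-2`, the column of degree `j-1+ℓ`, and the columns of
degrees `d, …, d+j-1`. -/
noncomputable def sylvMat {R : Type*} [CommRing R] (A B : R[X]) (d j ℓ : ℕ) :
    Matrix (Fin (2 * j)) (Fin (2 * j)) R := fun r c =>
  (if (r : ℕ) < j then X ^ (r : ℕ) * A else X ^ ((r : ℕ) - j) * B).coeff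
    (if (c : ℕ) < j - 1 then (c : ℕ)
     else if (c : ℕ) = j - 1 then j - 1 + ℓ
     else d + ((c : ℕ) - j))

/-- The sequence of symmetric subresultants of `A` and `B` (of formal degree `d`):
`S_0 = B` and `S_j = ∑_{ℓ=0}^{d-j} det (Sylv_{j,ℓ}(A,B)) · X^ℓ` for `1 ≤ j`. -/
noncomputable def symSubres {R : Type*} [CommRing R] (A B : R[X]) (d j : ℕ) : R[X] :=
  if j = 0 then B
  else ∑ ℓ ∈ Finset.range (d - j + 1), C (sylvMat A B d j ℓ).det * X ^ ℓ

/-- The pair `(S_j, S_{j+1})` of symmetric subresultants of `A`, `B` (formal degree `d`) is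
`(α,β)`-defective: `v(S_j) = 0`, `deg S_j = d - j`, `v(S_{j+1}) = α`, `deg S_{j+1} = d - j - β`. -/
def IsDefective {R : Type*} [CommRing R] (A B : R[X]) (d j α β : ℕ) : Prop :=
  (symSubres A B d j).coeff 0 ≠ 0 ∧
  (symSubres A B d j).natDegree + j = d ∧
  symSubres A B d (j + 1) ≠ 0 ∧
  (symSubres A B d (j + 1)).natTrailingDegree = α ∧
  (symSubres A B d (j + 1)).natDegree + β + j = d

/-!
Cramer's rule along the column of degree `j` of `Sylv_{j+1,0}(A,B)` gives a Bézout relation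
`U A + V B = X^j S_{j+1}` with `deg U, deg V ≤ j`. For `J = j + k`, the row vector of
`X^n (U, V)` times `Sylv_{J,ℓ}(A,B)` is the coefficient vector of `X^(n+j) S_{j+1}` at the kept
column degrees. As `S_{j+1}` has valuation `α` and degree `d - j - β`, for the two consecutive
shifts `n = m, m + 1` with `m = k - 1 - α` this vector vanishes outside the column of degree
`J - 1 + ℓ`. Two non-proportional such vectors give a nonzero vector in the left kernel, so every
`det Sylv_{J,ℓ}(A,B)` vanishes and `S_J = 0`.
-/

open Finset Matrix

namespace Matrix

variable {n R : Type*} [Fintype n] [DecidableEq n] [CommRing R] [IsDomain R]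

theorem det_eq_zero_of_vecMul_eq_single (M : Matrix n n R) (c₀ : n) {v₁ v₂ : n → R}
    (h₁ : ∀ c, c ≠ c₀ → (v₁ ᵥ* M) c = 0) (h₂ : ∀ c, c ≠ c₀ → (v₂ ᵥ* M) c = 0)
    {r : n} (hr₁ : v₁ r ≠ 0) (hr₂ : v₂ r = 0) (hv₂ : v₂ ≠ 0) : M.det = 0 := by
  rw [← exists_vecMul_eq_zero_iff]
  by_cases hs : (v₂ ᵥ* M) c₀ = 0
  · exact ⟨v₂, hv₂, funext fun c => if hc : c = c₀ then hc ▸ hs else h₂ c hc⟩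
  -- `v₁` and `v₂` are not proportional, so this combination is nonzero and kills column `c₀`.
  refine ⟨(v₂ ᵥ* M) c₀ • v₁ - (v₁ ᵥ* M) c₀ • v₂, fun h => ?_, ?_⟩
  · simpa [hr₁, hr₂, hs] using congrFun h r
  · funext c
    by_cases hc : c = c₀
    · subst hc
      simp [sub_vecMul, smul_vecMul, mul_comm]
    · simp [sub_vecMul, smul_vecMul, h₁ c hc, h₂ c hc]

end Matrix

variable {R : Type*} [CommRing R]

theorem Polynomial.coeff_mul_eq_sum_range {P : R[X]} {n : ℕ} (hP : P.natDegree < n) (A : R[X])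
    (t : ℕ) : (P * A).coeff t = ∑ r ∈ range n, P.coeff r * (X ^ r * A).coeff t := by
  conv_lhs => rw [as_sum_range_C_mul_X_pow' P hP]
  simp only [sum_mul, finsetSum_coeff, mul_assoc, coeff_C_mul]

theorem Polynomial.coeff_sum_range_C_mul_X_pow (a : ℕ → R) (n t : ℕ) :
    (∑ i ∈ range n, C (a i) * X ^ i).coeff t = if t < n then a t else 0 := by
  simp

theorem Polynomial.natDegree_sum_range_C_mul_X_pow_lt (a : ℕ → R) {n : ℕ} (hn : 0 < n) :
    (∑ i ∈ range n, C (a i) * X ^ i).natDegree < n :=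
  (natDegree_sum_le_of_forall_le _ _ (n := n - 1) fun i hi =>
    (natDegree_C_mul_X_pow_le _ _).trans (by rw [mem_range] at hi; omega)).trans_lt (by omega)

theorem Polynomial.coeff_X_pow_succ_mul_natTrailingDegree_add (P : R[X]) (m : ℕ) :
    (X ^ (m + 1) * P).coeff (P.natTrailingDegree + m) = 0 := by
  rw [coeff_X_pow_mul']
  split_ifs
  · exact coeff_eq_zero_of_lt_natTrailingDegree (by omega)
  · rfl

noncomputable def sylvRow (A B : R[X]) (j r : ℕ) : R[X] :=
  if r < j then X ^ r * A else X ^ (r - j) * B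

def sylvCol (d j ℓ c : ℕ) : ℕ :=
  if c < j - 1 then c else if c = j - 1 then j - 1 + ℓ else d + (c - j)

def sylvVec (P Q : R[X]) (j r : ℕ) : R := if r < j then P.coeff r else Q.coeff (r - j)

theorem sylvMat_apply (A B : R[X]) (d j ℓ : ℕ) (r c : Fin (2 * j)) :
    sylvMat A B d j ℓ r c = (sylvRow A B j r).coeff (sylvCol d j ℓ c.val) := rfl

theorem coeff_sylvRow_eq_zero {A B : R[X]} {d j r t : ℕ} (hA : A.natDegree ≤ d)
    (hB : B.natDegree ≤ d) (hr : r < 2 * j) (ht : d + j ≤ t) : (sylvRow A B j r).coeff t = 0 := by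
  unfold sylvRow
  split_ifs <;> rw [coeff_X_pow_mul'] <;> split_ifs <;>
    first | rfl | exact coeff_eq_zero_of_natDegree_lt (by omega)

theorem sum_sylvVec_mul_coeff_sylvRow (A B : R[X]) {P Q : R[X]} {j : ℕ} (hP : P.natDegree < j)
    (hQ : Q.natDegree < j) (t : ℕ) :
    ∑ r : Fin (2 * j), sylvVec P Q j r * (sylvRow A B j r).coeff t = (P * A + Q * B).coeff t := by
  rw [Fin.sum_univ_eq_sum_range (fun r => sylvVec P Q j r * (sylvRow A B j r).coeff t), two_mul,
    sum_range_add, coeff_add, coeff_mul_eq_sum_range hP, coeff_mul_eq_sum_range hQ]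
  congr 1 <;> refine sum_congr rfl fun r hr => ?_ <;> simp [sylvVec, sylvRow, mem_range.1 hr]

theorem sylvVec_vecMul_sylvMat (A B : R[X]) {P Q : R[X]} {d j : ℕ} (hP : P.natDegree < j)
    (hQ : Q.natDegree < j) (ℓ : ℕ) :
    (fun r : Fin (2 * j) => sylvVec P Q j r) ᵥ* sylvMat A B d j ℓ =
      fun c => (P * A + Q * B).coeff (sylvCol d j ℓ c.val) :=
  funext fun _ => sum_sylvVec_mul_coeff_sylvRow A B hP hQ _

theorem sylvMat_updateCol (A B : R[X]) {d j : ℕ} (hj : 0 < j) (ℓ ℓ' : ℕ) :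
    (sylvMat A B d j ℓ).updateCol ⟨j - 1, by omega⟩
        (fun r => (sylvRow A B j r).coeff (j - 1 + ℓ')) = sylvMat A B d j ℓ' := by
  ext r c
  rw [updateCol_apply]
  split_ifs with hc
  · simp [hc, sylvMat_apply, sylvCol]
  · have : (c : ℕ) ≠ j - 1 := fun h => hc (Fin.ext h)
    simp [sylvMat_apply, sylvCol, this]

theorem coeff_symSubres (A B : R[X]) {d j : ℕ} (hj : j ≠ 0) (ℓ : ℕ) :
    (symSubres A B d j).coeff ℓ = if ℓ ≤ d - j then (sylvMat A B d j ℓ).det else 0 := by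
  simp [symSubres, hj, finsetSum_coeff]

theorem det_updateCol_coeff_sylvRow {A B : R[X]} {d j : ℕ} (hA : A.natDegree ≤ d)
    (hB : B.natDegree ≤ d) (hjd : j < d) (t : ℕ) :
    ((sylvMat A B d (j + 1) 0).updateCol ⟨j, by omega⟩
        (fun r => (sylvRow A B (j + 1) r).coeff t)).det =
      (X ^ j * symSubres A B d (j + 1)).coeff t := by
  rw [coeff_X_pow_mul', coeff_symSubres A B (Nat.succ_ne_zero j)]
  by_cases htj : t < j
  · -- the new column repeats the column of degree `t`
    rw [if_neg (by omega)]
    refine det_zero_of_column_eq (i := ⟨t, by omega⟩) (j := ⟨j, by omega⟩)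
      (by simp [Fin.ext_iff]; omega) fun r => ?_
    simp [htj.ne, sylvMat_apply, sylvCol, htj]
  by_cases htd : t < d
  · obtain ⟨ℓ, rfl⟩ := Nat.exists_eq_add_of_le (not_lt.1 htj)
    rw [if_pos (by omega), if_pos (by omega), Nat.add_sub_cancel_left]
    simpa using congrArg det (sylvMat_updateCol A B (d := d) (Nat.succ_pos j) 0 ℓ)
  rw [if_pos (by omega), if_neg (by omega)]
  by_cases htJ : t < d + (j + 1)
  · -- the new column repeats the column of degree `t ≥ d`
    refine det_zero_of_column_eq (i := ⟨j + 1 + (t - d), by omega⟩) (j := ⟨j, by omega⟩)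
      (by simp [Fin.ext_iff]; omega) fun r => ?_
    have hne : ¬j + 1 + (t - d) = j := by omega
    simp [sylvMat_apply, sylvCol, hne, show ¬j + 1 + (t - d) < j by omega,
      Nat.add_sub_cancel' (not_lt.1 htd)]
  · exact det_eq_zero_of_column_eq_zero ⟨j, by omega⟩ fun r => by
      simpa using coeff_sylvRow_eq_zero hA hB r.isLt (by omega)

/-- The cofactors of the column of degree `j` in `Sylv_{j+1,0}(A,B)` give the Bézout relation. -/
theorem exists_bezout_symSubres {A B : R[X]} {d j : ℕ} (hA : A.natDegree ≤ d)
    (hB : B.natDegree ≤ d) (hjd : j < d) :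
    ∃ U V : R[X], U.natDegree ≤ j ∧ V.natDegree ≤ j ∧
      U * A + V * B = X ^ j * symSubres A B d (j + 1) := by
  let w : ℕ → R := fun n =>
    if h : n < 2 * (j + 1) then (sylvMat A B d (j + 1) 0).adjugate ⟨j, by omega⟩ ⟨n, h⟩ else 0
  let U := ∑ i ∈ range (j + 1), C (w i) * X ^ i
  let V := ∑ i ∈ range (j + 1), C (w (j + 1 + i)) * X ^ i
  have hU : U.natDegree < j + 1 := natDegree_sum_range_C_mul_X_pow_lt _ j.succ_pos
  have hV : V.natDegree < j + 1 := natDegree_sum_range_C_mul_X_pow_lt _ j.succ_pos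
  refine ⟨U, V, Nat.lt_succ_iff.1 hU, Nat.lt_succ_iff.1 hV, ?_⟩
  ext t
  rw [← det_updateCol_coeff_sylvRow hA hB hjd, ← cramer_apply, cramer_eq_adjugate_mulVec,
    ← sum_sylvVec_mul_coeff_sylvRow A B hU hV]
  refine sum_congr rfl fun r _ => congrArg (· * _) ?_
  simp only [sylvVec, U, V, coeff_sum_range_C_mul_X_pow, w]
  have := r.isLt
  split_ifs <;> first | rfl | omega | (congr 1; ext; simp only; omega)

theorem coeff_X_pow_mul_sylvCol_eq_zero {S : R[X]} {d J ℓ n α c : ℕ} (hc : c < 2 * J)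
    (hcJ : c ≠ J - 1) (hα : α ≤ S.natTrailingDegree) (hJ : J ≤ n + α + 1)
    (hd : S.natDegree + n < d) : (X ^ n * S).coeff (sylvCol d J ℓ c) = 0 := by
  rw [coeff_X_pow_mul', sylvCol]
  split_ifs <;> first
    | rfl
    | exact coeff_eq_zero_of_lt_natTrailingDegree (by omega)
    | exact coeff_eq_zero_of_natDegree_lt (by omega)

theorem exists_sylvVec_X_pow_mul_ne_zero {U V : R[X]} {J m : ℕ} (hUV : U ≠ 0 ∨ V ≠ 0)
    (hU : U.natDegree + m + 1 < J) (hV : V.natDegree + m + 1 < J) :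
    ∃ r r' : Fin (2 * J), sylvVec (X ^ m * U) (X ^ m * V) J r ≠ 0 ∧
      sylvVec (X ^ (m + 1) * U) (X ^ (m + 1) * V) J r = 0 ∧
      sylvVec (X ^ (m + 1) * U) (X ^ (m + 1) * V) J r' ≠ 0 := by
  rcases hUV with hU0 | hV0
  · have := natTrailingDegree_le_natDegree U
    refine ⟨⟨U.natTrailingDegree + m, by omega⟩, ⟨U.natTrailingDegree + (m + 1), by omega⟩, ?_⟩
    simp [sylvVec, show U.natTrailingDegree + m < J by omega,
      show U.natTrailingDegree + (m + 1) < J by omega,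
      coeff_X_pow_succ_mul_natTrailingDegree_add, hU0]
  · have := natTrailingDegree_le_natDegree V
    refine ⟨⟨J + (V.natTrailingDegree + m), by omega⟩,
      ⟨J + (V.natTrailingDegree + (m + 1)), by omega⟩, ?_⟩
    simp [sylvVec, coeff_X_pow_succ_mul_natTrailingDegree_add, hV0]

theorem det_sylvMat_eq_zero_of_bezout [IsDomain R] {A B U V S : R[X]} {d j k m α β : ℕ}
    (hUV : U * A + V * B = X ^ j * S) (hU : U.natDegree ≤ j) (hV : V.natDegree ≤ j)
    (hS : S ≠ 0) (hα : α ≤ S.natTrailingDegree) (hβ : S.natDegree + β + j ≤ d)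
    (hmk : m + 2 ≤ k) (hmα : k ≤ m + α + 1) (hmβ : m + 2 ≤ β) (ℓ : ℕ) :
    (sylvMat A B d (j + k) ℓ).det = 0 := by
  have hUV0 : U ≠ 0 ∨ V ≠ 0 := by
    by_contra! h
    simp [h.1, h.2, hS] at hUV
  -- the vector of `X ^ n * (U, V)` is mapped to the coefficients of `X ^ (n + j) * S`
  have hsupp : ∀ n, m ≤ n → n ≤ m + 1 → ∀ c : Fin (2 * (j + k)), c ≠ ⟨j + k - 1, by omega⟩ →
      ((fun r : Fin (2 * (j + k)) => sylvVec (X ^ n * U) (X ^ n * V) (j + k) r) ᵥ*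
        sylvMat A B d (j + k) ℓ) c = 0 := by
    intro n hmn hn c hc
    have hdeg : ∀ P : R[X], P.natDegree ≤ j → (X ^ n * P).natDegree < j + k := fun P hP =>
      (natDegree_mul_le.trans (add_le_add (natDegree_X_pow_le n) hP)).trans_lt (by omega)
    rw [sylvVec_vecMul_sylvMat A B (hdeg U hU) (hdeg V hV),
      show X ^ n * U * A + X ^ n * V * B = X ^ (n + j) * S by linear_combination X ^ n * hUV]
    exact coeff_X_pow_mul_sylvCol_eq_zero c.isLt (fun h => hc (Fin.ext h)) hα (by omega)
      (by omega)
  obtain ⟨r, r', hr₁, hr₂, hr'⟩ :=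
    exists_sylvVec_X_pow_mul_ne_zero (J := j + k) (m := m) hUV0 (by omega) (by omega)
  exact det_eq_zero_of_vecMul_eq_single _ _ (hsupp m le_rfl (by omega))
    (hsupp (m + 1) (by omega) le_rfl) hr₁ hr₂
    fun h => hr' (congrFun h r')

theorem structure_theorem_nullity_general (D : Subring ℂ) (A B : Polynomial D) (d j α β : ℕ)
    (hAdeg : A.degree = (d : ℕ)) (hBdeg : B.degree = (d : ℕ))
    (hdef : IsDefective A B d j α β) (hα : 0 < α) (hβ : 1 < β) :
    ∀ k, 2 ≤ k → k ≤ α + β - 1 → symSubres A B d (j + k) = 0 := by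
  obtain ⟨-, -, hS, htrail, hdeg⟩ := hdef
  intro k hk hkαβ
  obtain ⟨U, V, hU, hV, hUV⟩ := exists_bezout_symSubres (j := j)
    (natDegree_le_of_degree_le hAdeg.le) (natDegree_le_of_degree_le hBdeg.le) (by omega)
  have hdet (ℓ : ℕ) : (sylvMat A B d (j + k) ℓ).det = 0 :=
    det_sylvMat_eq_zero_of_bezout (m := k - 1 - α) hUV hU hV hS htrail.ge hdeg.le
      (by omega) (by omega) (by omega) ℓ
  ext ℓ
  simp [coeff_symSubres A B (show j + k ≠ 0 by omega), hdet]

/-- Structure theorem, part 1, case `α > 0`, `β > 1`: if `(S_j, S_{j+1})` is `(α,β)`-defective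
with `α > 0` and `β > 1`, then `S_{j+k} = 0` for `k = 2, …, α+β-1`. -/
theorem structure_theorem_nullity (D : Subring ℂ) (A B : Polynomial D) (d j α β : ℕ)
    (hAdeg : A.degree = (d : ℕ)) (hBdeg : B.degree = (d : ℕ))
    (hAval : A.coeff 0 ≠ 0) (hBval : B.coeff 0 ≠ 0)
    (hdef : IsDefective A B d j α β) (hα : 0 < α) (hβ : 1 < β) :
    ∀ k, 2 ≤ k → k ≤ α + β - 1 → symSubres A B d (j + k) = 0 :=
  structure_theorem_nullity_general D A B d j α β hAdeg hBdeg hdef hα hβ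
end

section
/- Let P and P₁ be two polynomials of D[X] such that deg P = d, deg P₁ = d−β ≤ d, v(P) = 0 and v(P₁) = α ≥ 0. Then squo(P, P₁) = squo(P_{|(α+β+1)}, (P₁)_{|(α+β+1)}), where for the truncation P₁ is regarded as a polynomial of formal degree d. -/
open Polynomial

/-!
Put `B = P₁ / X^α`, so that `B(0) ≠ 0`. Symmetric quotients are unique: from
`Q B + X^β r = Q' B + X^β r'` with `deg r, deg r' < m ≤ deg B`, the polynomial `X^β` divides
`Q - Q'` (as `B(0) ≠ 0`) while a degree count gives `deg (Q - Q') < β`. So it suffices to see that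
`Q = squo(P, P₁)` leaves an admissible remainder on the truncations too. Truncation at
`ℓ = α + β + 1` keeps the `ℓ` lowest and the `ℓ` highest coefficients, and `deg Q ≤ α + β`;
hence the coefficients of `Q · (P₁)_{|ℓ} / X^α` below `β` are those of `Q B`, and those from
`β + ℓ` on are those of `Q B` shifted by `d + 1 - 2ℓ`. Therefore `P_{|ℓ} - Q · (P₁)_{|ℓ} / X^α`
is `X^β` times a polynomial of degree `< ℓ`.
-/

/-- Symmetric truncation `P_{|ℓ}` of a polynomial `P` of formal degree `d`:
`P_{|ℓ} = p_0 + ⋯ + p_{ℓ-1}X^{ℓ-1} + p_{d-ℓ+1}X^ℓ + ⋯ + p_d X^{2ℓ-1}` for `1 ≤ ℓ ≤ ⌊d/2⌋`,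
with `P_{|0} = 0` and `P_{|ℓ} = P` for `ℓ > ⌊d/2⌋`. -/
noncomputable def strunc {R : Type*} [CommRing R] (P : R[X]) (d ℓ : ℕ) : R[X] :=
  if ℓ = 0 then 0
  else if 2 * ℓ ≤ d then
    (∑ i ∈ Finset.range ℓ, C (P.coeff i) * X ^ i) +
      ∑ i ∈ Finset.range ℓ, C (P.coeff (d - ℓ + 1 + i)) * X ^ (ℓ + i)
  else P

namespace Polynomial

variable {R : Type*} [CommRing R]

theorem coeff_divByMonic_X_pow (p : R[X]) (n k : ℕ) : (p /ₘ X ^ n).coeff k = p.coeff (k + n) := by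
  nontriviality R
  have hmod : (p %ₘ X ^ n).coeff (k + n) = 0 :=
    coeff_eq_zero_of_degree_lt ((degree_modByMonic_lt p (monic_X_pow n)).trans_le
      (by rw [degree_X_pow]; exact_mod_cast Nat.le_add_left n k))
  conv_rhs => rw [← modByMonic_add_div p (X ^ n)]
  rw [coeff_add, hmod, coeff_X_pow_mul, zero_add]

theorem coeff_mul_eq_sum_range_s10 {p q : R[X]} {n j : ℕ} (hp : p.natDegree ≤ n) (hj : n ≤ j) :
    (p * q).coeff j = ∑ a ∈ Finset.range (n + 1), p.coeff a * q.coeff (j - a) := by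
  conv_lhs => rw [p.as_sum_range' (n + 1) (by omega), Finset.sum_mul, finsetSum_coeff]
  refine Finset.sum_congr rfl fun a ha => ?_
  rw [Finset.mem_range] at ha
  rw [← C_mul_X_pow_eq_monomial, mul_assoc, coeff_C_mul, coeff_X_pow_mul', if_pos (by omega)]

theorem coeff_mul_eq_of_coeff_eq_of_lt {p q q' : R[X]} {m j : ℕ}
    (h : ∀ k < m, q'.coeff k = q.coeff k) (hj : j < m) :
    (p * q').coeff j = (p * q).coeff j := by
  simp only [coeff_mul]
  refine Finset.sum_congr rfl fun x hx => ?_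
  rw [h x.2 (by rw [Finset.HasAntidiagonal.mem_antidiagonal] at hx; omega)]

theorem coeff_mul_eq_of_coeff_eq_add {p q q' : R[X]} {m n s j : ℕ} (hp : p.natDegree ≤ n)
    (h : ∀ k, m ≤ k → q'.coeff k = q.coeff (k + s)) (hj : m + n ≤ j) :
    (p * q').coeff j = (p * q).coeff (j + s) := by
  rw [coeff_mul_eq_sum_range_s10 hp (by omega), coeff_mul_eq_sum_range_s10 hp (by omega)]
  refine Finset.sum_congr rfl fun a ha => ?_
  rw [Finset.mem_range] at ha
  rw [h _ (by omega), Nat.sub_add_comm (by omega)]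

theorem exists_eq_X_pow_mul_of_coeff_eq_zero {g : R[X]} {β ℓ : ℕ}
    (hlow : ∀ j < β, g.coeff j = 0) (hhigh : ∀ j, β + ℓ ≤ j → g.coeff j = 0) :
    ∃ r : R[X], r.degree < ℓ ∧ g = X ^ β * r := by
  obtain ⟨r, rfl⟩ := X_pow_dvd_iff.2 hlow
  refine ⟨r, (degree_lt_iff_coeff_zero r ℓ).2 fun k hk => ?_, rfl⟩
  rw [← coeff_X_pow_mul r β, add_comm]
  exact hhigh _ (by omega)

theorem eq_of_mul_add_X_pow_mul_eq [IsDomain R] {B Q Q' r r' : R[X]} {β m : ℕ}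
    (hB0 : B.coeff 0 ≠ 0) (hB : m ≤ B.natDegree) (hr : r.degree < m) (hr' : r'.degree < m)
    (h : Q * B + X ^ β * r = Q' * B + X ^ β * r') : Q = Q' := by
  by_contra hne
  have hBne : B ≠ 0 := fun hB => hB0 (by simp [hB])
  have hS : Q - Q' ≠ 0 := sub_ne_zero.2 hne
  have key : (Q - Q') * B = X ^ β * (r' - r) := by linear_combination h
  have hT : r' - r ≠ 0 := by
    rintro hT
    rw [hT, mul_zero] at key
    exact mul_ne_zero hS hBne key
  have hdeg : (Q - Q').natDegree + B.natDegree < β + m := by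
    have : (r' - r).natDegree < m :=
      (natDegree_lt_iff_degree_lt hT).2 ((degree_sub_le _ _).trans_lt (max_lt hr' hr))
    rw [← natDegree_mul hS hBne, key, natDegree_mul (pow_ne_zero _ X_ne_zero) hT, natDegree_X_pow]
    omega
  have htrail : β ≤ (Q - Q').natTrailingDegree := by
    have := congrArg natTrailingDegree key
    rw [natTrailingDegree_mul hS hBne, natTrailingDegree_mul (pow_ne_zero _ X_ne_zero) hT,
      natTrailingDegree_X_pow, natTrailingDegree_eq_zero.2 (Or.inr hB0)] at this
    omega
  have := (Q - Q').natTrailingDegree_le_natDegree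
  omega

end Polynomial

section strunc

variable {R : Type*} [CommRing R] (P : R[X]) {d ℓ j : ℕ}

theorem strunc_eq_self_of_lt (h : d < 2 * ℓ) : strunc P d ℓ = P := by
  rw [strunc, if_neg (by omega), if_neg (by omega)]

theorem coeff_strunc (hℓ : ℓ ≠ 0) (h : 2 * ℓ ≤ d) :
    (strunc P d ℓ).coeff j =
      if j < ℓ then P.coeff j else if j < 2 * ℓ then P.coeff (j + (d + 1 - 2 * ℓ)) else 0 := by
  simp only [strunc, if_neg hℓ, if_pos h, pow_add, mul_left_comm _ (X ^ ℓ), ← Finset.mul_sum,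
    coeff_add, coeff_X_pow_mul', finsetSum_coeff, coeff_C_mul, coeff_X_pow, mul_ite, mul_one,
    mul_zero, Finset.sum_ite_eq, Finset.mem_range]
  split_ifs <;> (try simp only [add_zero, zero_add]) <;> first | omega | rfl | (congr 1; omega)

theorem strunc_map {S : Type*} [CommRing S] (φ : R →+* S) :
    (strunc P d ℓ).map φ = strunc (P.map φ) d ℓ := by
  unfold strunc
  split_ifs <;> simp [Polynomial.map_sum]

theorem coeff_strunc_of_lt (h : 2 * ℓ ≤ d) (hj : j < ℓ) : (strunc P d ℓ).coeff j = P.coeff j := by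
  rw [coeff_strunc P (by omega) h, if_pos hj]

theorem coeff_strunc_of_le (hℓ : ℓ ≠ 0) (h : 2 * ℓ ≤ d) (hP : P.natDegree ≤ d) (hj : ℓ ≤ j) :
    (strunc P d ℓ).coeff j = P.coeff (j + (d + 1 - 2 * ℓ)) := by
  rw [coeff_strunc P hℓ h, if_neg (by omega)]
  split_ifs
  · rfl
  · exact (coeff_eq_zero_of_natDegree_lt (by omega)).symm

theorem natDegree_strunc (hℓ : ℓ ≠ 0) (h : 2 * ℓ ≤ d) (hP : P.natDegree = d) :
    (strunc P d ℓ).natDegree = 2 * ℓ - 1 := by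
  have hP0 : P ≠ 0 := by
    rintro rfl
    rw [natDegree_zero] at hP
    omega
  refine le_antisymm (natDegree_le_iff_coeff_eq_zero.2 fun m hm => ?_) (le_natDegree_of_ne_zero ?_)
  · rw [coeff_strunc P hℓ h, if_neg (by omega), if_neg (by omega)]
  · rw [coeff_strunc_of_le P hℓ h hP.le (by omega), show 2 * ℓ - 1 + (d + 1 - 2 * ℓ) = d by omega,
      ← hP]
    exact leadingCoeff_ne_zero.2 hP0

end strunc

section SymmetricDivision

variable {R : Type*} [CommRing R]

theorem exists_strunc_eq_mul_add {f f₁ Q r : R[X]} {d α β : ℕ} (hf : f.natDegree ≤ d)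
    (hf₁ : f₁.natDegree ≤ d) (h : 2 * (α + β + 1) ≤ d) (hQ : Q.natDegree ≤ α + β)
    (hr : r.degree < ↑(d - (α + β))) (heq : f = Q * (f₁ /ₘ X ^ α) + X ^ β * r) :
    ∃ r' : R[X], r'.degree < ↑(α + β + 1) ∧
      strunc f d (α + β + 1) = Q * (strunc f₁ d (α + β + 1) /ₘ X ^ α) + X ^ β * r' := by
  set ℓ := α + β + 1
  have hrem : f - Q * (f₁ /ₘ X ^ α) = X ^ β * r := sub_eq_of_eq_add' heq
  have hlow : ∀ j < β, (strunc f d ℓ - Q * (strunc f₁ d ℓ /ₘ X ^ α)).coeff j = 0 := by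
    intro j hj
    have hmul : (Q * (strunc f₁ d ℓ /ₘ X ^ α)).coeff j = (Q * (f₁ /ₘ X ^ α)).coeff j :=
      coeff_mul_eq_of_coeff_eq_of_lt (m := β + 1) (fun k hk => by
        rw [coeff_divByMonic_X_pow, coeff_divByMonic_X_pow, coeff_strunc_of_lt _ h (by omega)])
        (by omega)
    rw [coeff_sub, coeff_strunc_of_lt _ h (by omega), hmul, ← coeff_sub, hrem, coeff_X_pow_mul',
      if_neg (by omega)]
  have hhigh : ∀ j, β + ℓ ≤ j → (strunc f d ℓ - Q * (strunc f₁ d ℓ /ₘ X ^ α)).coeff j = 0 := by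
    intro j hj
    have hmul : (Q * (strunc f₁ d ℓ /ₘ X ^ α)).coeff j =
        (Q * (f₁ /ₘ X ^ α)).coeff (j + (d + 1 - 2 * ℓ)) :=
      coeff_mul_eq_of_coeff_eq_add hQ (m := β + 1) (fun k hk => by
        rw [coeff_divByMonic_X_pow, coeff_divByMonic_X_pow,
          coeff_strunc_of_le _ (by omega) h hf₁ (by omega)]
        congr 1
        omega) (by omega)
    rw [coeff_sub, coeff_strunc_of_le _ (by omega) h hf (by omega), hmul, ← coeff_sub, hrem,
      coeff_X_pow_mul', if_pos (by omega)]
    exact coeff_eq_zero_of_degree_lt (hr.trans_le (by exact_mod_cast (by omega)))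
  obtain ⟨r', hr', hg⟩ := exists_eq_X_pow_mul_of_coeff_eq_zero hlow hhigh
  exact ⟨r', hr', by rw [← hg]; ring⟩

theorem eq_of_strunc_eq_mul_add [IsDomain R] {f f₁ Q r Q' r' : R[X]} {d α β : ℕ}
    (hf : f.natDegree = d) (hf₁ : f₁.natDegree = d - β) (hαβ : α + β ≤ d)
    (hf₁α : f₁.coeff α ≠ 0) (hQ : Q.natDegree ≤ α + β) (hr : r.degree < ↑(d - (α + β)))
    (heq : f = Q * (f₁ /ₘ X ^ α) + X ^ β * r)
    (hr' : r'.degree < ↑((strunc f d (α + β + 1)).natDegree - (α + β)))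
    (heq' : strunc f d (α + β + 1) = Q' * (strunc f₁ d (α + β + 1) /ₘ X ^ α) + X ^ β * r') :
    Q = Q' := by
  set ℓ := α + β + 1
  have hlead : f₁.coeff (d - β) ≠ 0 := by
    rw [← hf₁, ← leadingCoeff, leadingCoeff_ne_zero]
    rintro rfl
    exact hf₁α (coeff_zero α)
  rcases le_or_gt (2 * ℓ) d with h | h
  · obtain ⟨r'', hr'', heq''⟩ := exists_strunc_eq_mul_add hf.le (by omega) h hQ hr heq
    rw [natDegree_strunc f (by omega) h hf, show 2 * ℓ - 1 - (α + β) = ℓ by omega] at hr'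
    refine eq_of_mul_add_X_pow_mul_eq ?_ ?_ hr'' hr' (heq''.symm.trans heq')
    · rwa [coeff_divByMonic_X_pow, zero_add, coeff_strunc_of_lt _ h (by omega)]
    · refine le_natDegree_of_ne_zero ?_
      rwa [coeff_divByMonic_X_pow, coeff_strunc_of_le _ (by omega) h (by omega) (by omega),
        show ℓ + α + (d + 1 - 2 * ℓ) = d - β by omega]
  · rw [strunc_eq_self_of_lt _ h, hf] at hr'
    rw [strunc_eq_self_of_lt _ h, strunc_eq_self_of_lt _ h] at heq'
    refine eq_of_mul_add_X_pow_mul_eq ?_ ?_ hr hr' (heq.symm.trans heq')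
    · rwa [coeff_divByMonic_X_pow, zero_add]
    · refine le_natDegree_of_ne_zero ?_
      rwa [coeff_divByMonic_X_pow, show d - (α + β) + α = d - β by omega]

end SymmetricDivision

theorem squo_of_trunc_general (D : Subring ℂ) (P P₁ : Polynomial D) (d α β : ℕ)
    (hPdeg : P.degree = (d : ℕ))
    (hβd : β ≤ d)
    (hP₁deg : P₁.degree = ((d - β : ℕ) : WithBot ℕ))
    (hP₁val : P₁.natTrailingDegree = α) :
    ∀ Q R Q' R' : Polynomial ℂ,
      Q.degree = ((α + β : ℕ) : WithBot ℕ) →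
      R.degree < ((d - (α + β) : ℕ) : WithBot ℕ) →
      P.map D.subtype = Q * (P₁.map D.subtype /ₘ X ^ α) + X ^ β * R →
      Q'.degree = ((α + β : ℕ) : WithBot ℕ) →
      R'.degree < (((strunc P d (α + β + 1)).natDegree - (α + β) : ℕ) : WithBot ℕ) →
      (strunc P d (α + β + 1)).map D.subtype =
        Q' * ((strunc P₁ d (α + β + 1)).map D.subtype /ₘ X ^ α) + X ^ β * R' →
      Q = Q' := by
  intro Q R Q' R' hQ hR hPeq _ hR' hP'eq
  have hinj : Function.Injective D.subtype := D.subtype_injective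
  have hP₁0 : P₁ ≠ 0 := by
    rintro rfl
    simp at hP₁deg
  have hP₁d : P₁.natDegree = d - β := natDegree_eq_of_degree_eq_some hP₁deg
  have hαβ : α + β ≤ d := by
    have := hP₁val ▸ P₁.natTrailingDegree_le_natDegree
    omega
  rw [← natDegree_map_eq_of_injective hinj, strunc_map] at hR'
  rw [strunc_map, strunc_map] at hP'eq
  refine eq_of_strunc_eq_mul_add (f := P.map D.subtype) ?_ ?_ hαβ ?_
    (natDegree_eq_of_degree_eq_some hQ).le hR hPeq hR' hP'eq
  · rw [natDegree_map_eq_of_injective hinj, natDegree_eq_of_degree_eq_some hPdeg]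
  · rw [natDegree_map_eq_of_injective hinj, hP₁d]
  · rw [coeff_map, map_ne_zero_iff _ hinj, ← hP₁val]
    exact coeff_natTrailingDegree_ne_zero.2 hP₁0

/-- Symmetric truncation does not affect the symmetric quotient:
`squo(P, P₁) = squo(P_{|α+β+1}, (P₁)_{|α+β+1})`, where for the truncation `P₁` is regarded as
a polynomial of formal degree `d`.  Symmetric quotients (over the fraction field of `D`,
inside `ℂ`) are characterized by the defining property of the symmetric division. -/
theorem squo_of_trunc (D : Subring ℂ) (P P₁ : Polynomial D) (d α β : ℕ)
    (hPdeg : P.degree = (d : ℕ)) (hPval : P.coeff 0 ≠ 0)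
    (hP₁ : P₁ ≠ 0) (hβd : β ≤ d)
    (hP₁deg : P₁.degree = ((d - β : ℕ) : WithBot ℕ))
    (hP₁val : P₁.natTrailingDegree = α) :
    ∀ Q R Q' R' : Polynomial ℂ,
      Q.degree = ((α + β : ℕ) : WithBot ℕ) →
      R.degree < ((d - (α + β) : ℕ) : WithBot ℕ) →
      P.map D.subtype = Q * (P₁.map D.subtype /ₘ X ^ α) + X ^ β * R →
      Q'.degree = ((α + β : ℕ) : WithBot ℕ) →
      R'.degree < (((strunc P d (α + β + 1)).natDegree - (α + β) : ℕ) : WithBot ℕ) →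
      (strunc P d (α + β + 1)).map D.subtype =
        Q' * ((strunc P₁ d (α + β + 1)).map D.subtype /ₘ X ^ α) + X ^ β * R' →
      Q = Q' :=
  squo_of_trunc_general D P P₁ d α β hPdeg hβd hP₁deg hP₁val
end

section
/- Let F = Σ_{i=0}^d f_i X^i and G = Σ_{i=0}^d g_i X^i be two polynomials over ℂ of equal valuation, where deg F is exactly d and G is formally regarded as having degree d. Let G/F = v + Σ_{i≥1} v_i X^i be the power-series expansion of G/F around 0, and let G/F = −u − Σ_{i≥1} u_i X^{−i} be its expansion around infinity. For k ≥ 1 let T_k(F,G) = (t_{i,j})_{1≤i,j≤k} be the Toeplitz matrix with t_{i,j} = v_{j−i} if i < j, t_{i,j} = u_{i−j} if i > j, and t_{i,j} = u+v if i = j. Then, if (S_j)_{−1 ≤ j ≤ d} is the sequence of symmetric subresultants computed with S_{−1} = F and S_0 = G, one has for every k = 1, …, d: S_k(0) = (−1)^k · f_0^k · f_d^k · det(T_k(F,G)). -/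
open Polynomial

/-! Since `S_k(0) = det Sylv_{k,0}(F,G)`, the matrix splits into `k × k` blocks of coefficients of
`X^r F`, `X^r G` in degrees `< k` and in degrees `d, …, d+k-1`. The low blocks are upper
triangular Toeplitz matrices, i.e. matrices of multiplication in `R[X]/(X^k)`; the high blocks
are transposes of those of the reversals `X^d P(1/X)`. The expansion at `0` says `G = v(X) F`
and the one at infinity says `G* = -u(X) F*` for the reversals, so the `G`-blocks are `W L` and
`-(Uᵀ H)` in terms of the `F`-blocks `L`, `H` and the Toeplitz matrices `W`, `U` of `v`, `u`.
A block shear gives `det = det L · det (-((W + Uᵀ) H))`, and `W + Uᵀ = T_k(F,G)`,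
`det L = f_0^k`, `det H = f_d^k`. -/

open scoped Matrix PowerSeries

namespace PowerSeries

variable {R : Type*}

/-- The matrix of multiplication by `φ` on `R[X]/(X^k)`, acting on row vectors in the basis
`1, X, …, X^(k-1)`. -/
noncomputable def upperToeplitz [Semiring R] (k : ℕ) (φ : R⟦X⟧) : Matrix (Fin k) (Fin k) R :=
  Matrix.of fun i j => if (i : ℕ) ≤ j then coeff ((j : ℕ) - i) φ else 0

theorem upperToeplitz_congr [Semiring R] {k : ℕ} {φ ψ : R⟦X⟧}
    (h : ∀ n < k, coeff n φ = coeff n ψ) : upperToeplitz k φ = upperToeplitz k ψ := by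
  ext i j
  simp only [upperToeplitz, Matrix.of_apply]
  split_ifs
  · exact h _ (by omega)
  · rfl

theorem upperToeplitz_neg [Ring R] (k : ℕ) (φ : R⟦X⟧) :
    upperToeplitz k (-φ) = -upperToeplitz k φ := by
  ext i j
  simp only [upperToeplitz, Matrix.of_apply, Matrix.neg_apply, map_neg]
  split_ifs <;> simp

theorem upperToeplitz_mul [Semiring R] (k : ℕ) (φ ψ : R⟦X⟧) :
    upperToeplitz k (φ * ψ) = upperToeplitz k φ * upperToeplitz k ψ := by
  ext i j
  have hj := j.isLt
  have hsum : (upperToeplitz k φ * upperToeplitz k ψ) i j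
      = ∑ s ∈ Finset.Ico (i : ℕ) (j + 1), coeff (s - i) φ * coeff (j - s) ψ := by
    simp only [upperToeplitz, Matrix.mul_apply, Matrix.of_apply]
    rw [Fin.sum_univ_eq_sum_range (fun s =>
      (if (i : ℕ) ≤ s then coeff (s - i) φ else 0) * (if s ≤ (j : ℕ) then coeff (j - s) ψ else 0))]
    have hsub : Finset.Ico (i : ℕ) (j + 1) ⊆ Finset.range k := fun s hs => by
      rw [Finset.mem_Ico] at hs
      exact Finset.mem_range.2 (by omega)
    rw [← Finset.sum_subset hsub fun s _ hs => by
      rw [Finset.mem_Ico, not_and_or, not_le, not_lt] at hs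
      rcases hs with hs | hs
      · simp [show ¬(i : ℕ) ≤ s by omega]
      · simp [show ¬s ≤ (j : ℕ) by omega]]
    refine Finset.sum_congr rfl fun s hs => ?_
    rw [Finset.mem_Ico] at hs
    rw [if_pos hs.1, if_pos (by omega)]
  rw [hsum, upperToeplitz, Matrix.of_apply]
  split_ifs with hij
  · rw [coeff_mul,
      Finset.Nat.sum_antidiagonal_eq_sum_range_succ (fun a b => coeff a φ * coeff b ψ),
      Finset.sum_Ico_eq_sum_range, Nat.succ_eq_add_one, (by omega : (j : ℕ) + 1 - i = j - i + 1)]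
    refine Finset.sum_congr rfl fun t _ => ?_
    rw [Nat.add_sub_cancel_left, Nat.sub_add_eq]
  · rw [Finset.Ico_eq_empty (by omega), Finset.sum_empty]

theorem det_upperToeplitz [CommRing R] (k : ℕ) (φ : R⟦X⟧) :
    (upperToeplitz k φ).det = constantCoeff φ ^ k := by
  rw [Matrix.det_of_isUpperTriangular]
  · simp [upperToeplitz, coeff_zero_eq_constantCoeff]
  · intro i j hji
    simp only [upperToeplitz, Matrix.of_apply]
    rw [if_neg (by simpa using hji)]

theorem upperToeplitz_add_transpose [Semiring R] (k : ℕ) (w u : ℕ → R) :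
    upperToeplitz k (mk w) + (upperToeplitz k (mk u))ᵀ =
      Matrix.of fun i j : Fin k =>
        if (i : ℕ) < (j : ℕ) then w ((j : ℕ) - (i : ℕ))
        else if (j : ℕ) < (i : ℕ) then u ((i : ℕ) - (j : ℕ))
        else u 0 + w 0 := by
  ext i j
  simp only [upperToeplitz, Matrix.add_apply, Matrix.transpose_apply, Matrix.of_apply, coeff_mk]
  rcases lt_trichotomy (i : ℕ) j with h | h | h
  · simp [h, h.le, h.not_ge]
  · simp [h, add_comm]
  · simp [Fin.le_def, h, h.le, h.not_ge]

end PowerSeries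

theorem Matrix.det_fromBlocks_mul_neg_mul {n R : Type*} [Fintype n] [DecidableEq n] [CommRing R]
    (L H W V : Matrix n n R) :
    (fromBlocks L H (W * L) (-(V * H))).det = L.det * (-((W + V) * H)).det := by
  have hshear : fromBlocks L H (W * L) (-(V * H)) =
      fromBlocks 1 0 W 1 * fromBlocks L H 0 (-((W + V) * H)) := by
    rw [fromBlocks_multiply]
    congr 1 <;> noncomm_ring
  rw [hshear, det_mul, det_fromBlocks_zero₁₂, det_fromBlocks_zero₂₁, det_one, one_mul, one_mul]

namespace Polynomial

open PowerSeries (upperToeplitz upperToeplitz_mul upperToeplitz_neg upperToeplitz_congr mk)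

variable {R : Type*}

theorem coe_eq_mk_mul [Semiring R] {A B : R[X]} {w : ℕ → R}
    (hw : ∀ n, B.coeff n = ∑ i ∈ Finset.range (n + 1), w i * A.coeff (n - i)) :
    (B : R⟦X⟧) = mk w * A := by
  ext n
  rw [coeff_coe, hw, PowerSeries.coeff_mul, Finset.Nat.sum_antidiagonal_eq_sum_range_succ
    (fun a b => PowerSeries.coeff a (mk w) * PowerSeries.coeff b (A : R⟦X⟧))]
  simp [coeff_coe]

section CommRing

variable [CommRing R]

theorem upperToeplitz_reflect_eq_neg_mul {A B : R[X]} {d k : ℕ} {u : ℕ → R} (hk : k ≤ d + 1)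
    (hu : ∀ n, n ≤ d →
      B.coeff (d - n) = -∑ i ∈ Finset.range (n + 1), u i * A.coeff (d - n + i)) :
    upperToeplitz k (reflect d B : R⟦X⟧) =
      -(upperToeplitz k (reflect d A) * upperToeplitz k (mk u)) := by
  rw [← upperToeplitz_mul, ← upperToeplitz_neg]
  refine upperToeplitz_congr fun n hn => ?_
  rw [map_neg, mul_comm, PowerSeries.coeff_mul, Finset.Nat.sum_antidiagonal_eq_sum_range_succ
      (fun a b => PowerSeries.coeff a (mk u) * PowerSeries.coeff b (reflect d A : R⟦X⟧)),
    coeff_coe, coeff_reflect, revAt_le (by omega), hu n (by omega)]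
  congr 1
  refine Finset.sum_congr rfl fun i hi => ?_
  rw [Finset.mem_range] at hi
  rw [PowerSeries.coeff_mk, coeff_coe, coeff_reflect, revAt_le (by omega),
    (by omega : d - (n - i) = d - n + i)]

noncomputable def coeffBlock (P : R[X]) (m k : ℕ) : Matrix (Fin k) (Fin k) R :=
  Matrix.of fun r c => (X ^ (r : ℕ) * P).coeff (m + c)

theorem coeffBlock_zero (P : R[X]) (k : ℕ) : coeffBlock P 0 k = upperToeplitz k (P : R⟦X⟧) := by
  ext r c
  simp [coeffBlock, upperToeplitz, coeff_X_pow_mul', coeff_coe]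

theorem coeffBlock_eq_transpose_reflect {P : R[X]} {d k : ℕ} (hP : P.natDegree ≤ d)
    (hk : k ≤ d + 1) : coeffBlock P d k = (upperToeplitz k (reflect d P : R⟦X⟧))ᵀ := by
  ext r c
  simp only [coeffBlock, upperToeplitz, Matrix.of_apply, Matrix.transpose_apply,
    coeff_X_pow_mul', coeff_coe, coeff_reflect]
  have hr := r.isLt
  by_cases hcr : (c : ℕ) ≤ r
  · rw [if_pos (by omega), if_pos hcr, revAt_le (by omega), (by omega : d + c - r = d - (r - c))]
  · rw [if_pos (by omega), if_neg hcr, coeff_eq_zero_of_natDegree_lt (by omega)]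

theorem det_sylvMat_zero (A B : R[X]) (d k : ℕ) :
    (sylvMat A B d k 0).det = (Matrix.fromBlocks (coeffBlock A 0 k) (coeffBlock A d k)
      (coeffBlock B 0 k) (coeffBlock B d k)).det := by
  let e : Fin k ⊕ Fin k ≃ Fin (2 * k) := finSumFinEquiv.trans (finCongr (two_mul k).symm)
  rw [← Matrix.det_submatrix_equiv_self e]
  congr 1
  ext (r | r) (c | c) <;>
    · simp only [e, sylvMat, coeffBlock, Matrix.fromBlocks, Matrix.submatrix_apply, Matrix.of_apply,
        Sum.elim_inl, Sum.elim_inr, Equiv.coe_trans, Function.comp_apply, finCongr_apply,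
        finSumFinEquiv_apply_left, finSumFinEquiv_apply_right, Fin.natAdd_eq_addNat, Fin.val_cast,
        Fin.val_castAdd, Fin.val_addNat, Fin.is_lt, add_lt_iff_neg_right, not_lt_zero, ↓reduceIte,
        add_tsub_cancel_right, zero_add, add_zero, mul_comm]
      congr 1
      have := c.isLt
      split_ifs <;> omega

theorem symSubres_coeff_zero (A B : R[X]) {d j : ℕ} (hj : j ≠ 0) :
    (symSubres A B d j).coeff 0 = (sylvMat A B d j 0).det := by
  simp [symSubres, hj, coeff_X_pow]

end CommRing

end Polynomial

theorem symSubres_toeplitz_link_general (F G : Polynomial ℂ) (d : ℕ)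
    (hFdeg : F.degree = (d : ℕ)) (hGdeg : G.natDegree ≤ d)
    (w u : ℕ → ℂ)
    (hw : ∀ n, G.coeff n = ∑ i ∈ Finset.range (n + 1), w i * F.coeff (n - i))
    (hu : ∀ n, n ≤ d →
      G.coeff (d - n) = -∑ i ∈ Finset.range (n + 1), u i * F.coeff (d - n + i)) :
    ∀ k, 1 ≤ k → k ≤ d →
      (symSubres F G d k).coeff 0 =
        (-1) ^ k * F.coeff 0 ^ k * F.coeff d ^ k *
          (Matrix.of fun i j : Fin k =>
            if (i : ℕ) < (j : ℕ) then w ((j : ℕ) - (i : ℕ))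
            else if (j : ℕ) < (i : ℕ) then u ((i : ℕ) - (j : ℕ))
            else u 0 + w 0).det := by
  intro k hk1 hkd
  have hFd : F.natDegree ≤ d := (natDegree_eq_of_degree_eq_some hFdeg).le
  have hlow : PowerSeries.upperToeplitz k (G : ℂ⟦X⟧) =
      PowerSeries.upperToeplitz k (PowerSeries.mk w) * PowerSeries.upperToeplitz k F := by
    rw [coe_eq_mk_mul hw, PowerSeries.upperToeplitz_mul]
  rw [symSubres_coeff_zero F G (by omega), det_sylvMat_zero, coeffBlock_zero, coeffBlock_zero,
    coeffBlock_eq_transpose_reflect hFd (by omega),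
    coeffBlock_eq_transpose_reflect hGdeg (by omega), hlow,
    upperToeplitz_reflect_eq_neg_mul (by omega) hu,
    Matrix.transpose_neg, Matrix.transpose_mul, Matrix.det_fromBlocks_mul_neg_mul, Matrix.det_neg,
    Matrix.det_mul, Matrix.det_transpose, PowerSeries.det_upperToeplitz,
    PowerSeries.det_upperToeplitz, PowerSeries.upperToeplitz_add_transpose]
  simp only [Fintype.card_fin, constantCoeff_coe, coeff_reflect, revAt_zero]
  ring

/-- Link between symmetric subresultants and Toeplitz matrices: if `G/F = v + ∑ v_i X^i`
around `0` and `G/F = -u - ∑ u_i X^{-i}` around infinity (encoded here by `w 0 = v`,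
`w i = v_i`, `u 0 = u`, `u i = u_i` and the corresponding coefficient identities), and
`T_k(F,G)` is the associated Toeplitz matrix, then
`S_k(0) = (-1)^k · f_0^k · f_d^k · det(T_k(F,G))` for `k = 1, …, d`. -/
theorem symSubres_toeplitz_link (F G : Polynomial ℂ) (d : ℕ)
    (hFdeg : F.degree = (d : ℕ)) (hGdeg : G.natDegree ≤ d) (hG : G ≠ 0)
    (hval : F.natTrailingDegree = G.natTrailingDegree)
    (w u : ℕ → ℂ)
    (hw : ∀ n, G.coeff n = ∑ i ∈ Finset.range (n + 1), w i * F.coeff (n - i))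
    (hu : ∀ n, n ≤ d →
      G.coeff (d - n) = -∑ i ∈ Finset.range (n + 1), u i * F.coeff (d - n + i)) :
    ∀ k, 1 ≤ k → k ≤ d →
      (symSubres F G d k).coeff 0 =
        (-1) ^ k * F.coeff 0 ^ k * F.coeff d ^ k *
          (Matrix.of fun i j : Fin k =>
            if (i : ℕ) < (j : ℕ) then w ((j : ℕ) - (i : ℕ))
            else if (j : ℕ) < (i : ℕ) then u ((i : ℕ) - (j : ℕ))
            else u 0 + w 0).det :=
  symSubres_toeplitz_link_general F G d hFdeg hGdeg w u hw hu
end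

section
/- (Gohberg–Semencul formula.) Let 𝒯_d = (t_{i−j})_{0≤i,j≤d−1} be an invertible Toeplitz matrix over ℂ. Denote by x = (x_0, …, x_{d−1})ᵗ the first column and by y = (y_0, …, y_{d−1})ᵗ the last column of 𝒯_d^{−1}. If x_0 ≠ 0, then 𝒯_d^{−1} = (1/x_0)·[L(x)·U(y) − L'(y)·U'(x)], where L(x) is the lower-triangular Toeplitz matrix whose first column is (x_0, x_1, …, x_{d−1})ᵗ, U(y) is the upper-triangular Toeplitz matrix whose first row is (y_{d−1}, y_{d−2}, …, y_0), L'(y) is the strictly lower-triangular Toeplitz matrix whose first column is (0, y_0, y_1, …, y_{d−2})ᵗ, and U'(x) is the strictly upper-triangular Toeplitz matrix whose first row is (0, x_{d−1}, x_{d−2}, …, x_1). -/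
/-- The `d × d` Toeplitz matrix `(t_{i-j})_{0 ≤ i,j ≤ d-1}`. -/
noncomputable def toeplitz (d : ℕ) (t : ℤ → ℂ) : Matrix (Fin d) (Fin d) ℂ :=
  Matrix.of fun i j : Fin d => t ((i : ℤ) - (j : ℤ))

open Matrix

private lemma gs_mul_vecMulVec {d : ℕ} (B : Matrix (Fin d) (Fin d) ℂ) (a b : Fin d → ℂ) :
    B * vecMulVec a b = vecMulVec (B *ᵥ a) b := by
  ext i j
  simp [Matrix.mul_apply, Matrix.vecMulVec_apply, Matrix.mulVec, dotProduct,
    Finset.sum_mul, mul_assoc]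

private lemma gs_vecMulVec_mul {d : ℕ} (B : Matrix (Fin d) (Fin d) ℂ) (a b : Fin d → ℂ) :
    vecMulVec a b * B = vecMulVec a (b ᵥ* B) := by
  ext i j
  simp [Matrix.mul_apply, Matrix.vecMulVec_apply, Matrix.vecMul, dotProduct,
    Finset.mul_sum, mul_assoc]

set_option maxHeartbeats 2000000 in
/-- Gohberg–Semencul formula: if `𝒯_d` is an invertible Toeplitz matrix with inverse having
first column `x` and last column `y`, and `x_0 ≠ 0`, then
`𝒯_d⁻¹ = (1/x_0)·(L(x)·U(y) - L'(y)·U'(x))`. -/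
theorem gohberg_semencul (d : ℕ) (hd : 0 < d) (t : ℤ → ℂ)
    (hinv : IsUnit (toeplitz d t).det)
    (x y : ℕ → ℂ)
    (hx : ∀ i : Fin d, x (i : ℕ) = (toeplitz d t)⁻¹ i ⟨0, hd⟩)
    (hy : ∀ i : Fin d, y (i : ℕ) = (toeplitz d t)⁻¹ i ⟨d - 1, by omega⟩)
    (hx0 : x 0 ≠ 0) :
    (toeplitz d t)⁻¹ =
      (x 0)⁻¹ •
        ((Matrix.of fun i j : Fin d =>
            if (j : ℕ) ≤ (i : ℕ) then x ((i : ℕ) - (j : ℕ)) else 0) *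
          (Matrix.of fun i j : Fin d =>
            if (i : ℕ) ≤ (j : ℕ) then y (d - 1 - ((j : ℕ) - (i : ℕ))) else 0) -
          (Matrix.of fun i j : Fin d =>
            if (j : ℕ) < (i : ℕ) then y ((i : ℕ) - (j : ℕ) - 1) else 0) *
          (Matrix.of fun i j : Fin d =>
            if (i : ℕ) < (j : ℕ) then x (d - ((j : ℕ) - (i : ℕ))) else 0)) := by
  set A := toeplitz d t with hAdef
  have hAB : A * A⁻¹ = 1 := Matrix.mul_nonsing_inv A hinv
  have hBA : A⁻¹ * A = 1 := Matrix.nonsing_inv_mul A hinv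
  set B := A⁻¹ with hBdef
  set z : Fin d := ⟨0, hd⟩ with hzdef
  set l : Fin d := ⟨d - 1, by omega⟩ with hldef
  have hAe : ∀ i j : Fin d, A i j = t ((i : ℤ) - (j : ℤ)) := fun i j => rfl
  -- persymmetry of A
  have hAper : ∀ i j : Fin d, A j.rev i.rev = A i j := by
    intro i j
    rw [hAe, hAe]
    congr 1
    have hi := i.isLt; have hj := j.isLt
    simp only [Fin.val_rev]
    omega
  -- persymmetry of B
  have hper : ∀ i j : Fin d, B i j = B j.rev i.rev := by
    have key : A * (Matrix.of fun i j : Fin d => B j.rev i.rev) = 1 := by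
      ext i j
      rw [Matrix.mul_apply]
      have h1 : ∀ k : Fin d, A i k * (Matrix.of fun i j : Fin d => B j.rev i.rev) k j
          = B j.rev k.rev * A k.rev i.rev := by
        intro k
        rw [hAper i k]
        simp only [Matrix.of_apply]
        ring
      rw [Finset.sum_congr rfl fun k _ => h1 k]
      have h2 : ∑ k : Fin d, B j.rev k.rev * A k.rev i.rev
          = ∑ k : Fin d, B j.rev k * A k i.rev :=
        Equiv.sum_comp Fin.revPerm (fun k => B j.rev k * A k i.rev)
      rw [h2, ← Matrix.mul_apply, hBA]
      by_cases h : i = j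
      · subst h; simp
      · rw [Matrix.one_apply_ne, Matrix.one_apply_ne h]
        simp only [ne_eq, Fin.rev_inj]
        exact fun hc => h hc.symm
    have : B = Matrix.of fun i j : Fin d => B j.rev i.rev := Matrix.inv_eq_right_inv key
    intro i j
    conv_lhs => rw [this]
    rfl
  have hX : ∀ i : Fin d, B i z = x (i : ℕ) := fun i => (hx i).symm
  have hY : ∀ i : Fin d, B i l = y (i : ℕ) := fun i => (hy i).symm
  have hrevl : (l : Fin d).rev = z := by
    apply Fin.ext; simp only [Fin.val_rev, hldef, hzdef]; omega
  have hrevz : (z : Fin d).rev = l := by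
    apply Fin.ext; simp only [Fin.val_rev, hldef, hzdef]
  have hyx : y (d - 1) = x 0 := by
    have h1 : y (d - 1) = B l l := hy l
    have h2 := hper l l
    rw [hrevl] at h2
    rw [h1, h2, hX]
  have hB0 : ∀ j : Fin d, B z j = y (d - 1 - (j : ℕ)) := by
    intro j
    rw [hper z j, hrevz, hY j.rev, Fin.val_rev]
    congr 1
    have := j.isLt; omega
  have hBl : ∀ j : Fin d, B l j = x (d - 1 - (j : ℕ)) := by
    intro j
    rw [hper l j, hrevl, hX j.rev, Fin.val_rev]
    congr 1
    have := j.isLt; omega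
  -- the defining equations
  have hAx : ∀ i : Fin d, ∑ k : Fin d, A i k * x (k : ℕ) = if (i : ℕ) = 0 then 1 else 0 := by
    intro i
    have := congrFun (congrFun hAB i) z
    rw [Matrix.mul_apply] at this
    simp only [hX] at this
    rw [this, Matrix.one_apply]
    congr 1
    simp [Fin.ext_iff, hzdef]
  have hAy : ∀ i : Fin d, ∑ k : Fin d, A i k * y (k : ℕ) = if (i : ℕ) = d - 1 then 1 else 0 := by
    intro i
    have := congrFun (congrFun hAB i) l
    rw [Matrix.mul_apply] at this
    simp only [hY] at this
    rw [this, Matrix.one_apply]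
    congr 1
    simp [Fin.ext_iff, hldef]
  obtain ⟨e, rfl⟩ : ∃ e, d = e + 1 := ⟨d - 1, by omega⟩
  set v : Fin (e+1) → ℂ := fun k => t ((k : ℤ) - (e+1)) with hvdef
  set g : Fin (e+1) → ℂ := B *ᵥ v with hgdef
  have hgapp : ∀ i : Fin (e+1), g i = ∑ k : Fin (e+1), B i k * v k := by
    intro i; simp [hgdef, Matrix.mulVec, dotProduct]
  set s : Fin (e+1) → ℂ := fun m => if (m : ℕ) = 0 then 0 else y ((m : ℕ) - 1) with hsdef
  -- A *ᵥ s away from the first row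
  have hAs : ∀ k : Fin (e+1), 0 < (k : ℕ) → (A *ᵥ s) k = -(x 0 * v k) := by
    intro k hk
    have hs1 : (A *ᵥ s) k = ∑ m : Fin (e+1), t ((k:ℤ) - (m:ℤ)) * s m := by
      simp [Matrix.mulVec, dotProduct, hAe]
    rw [hs1]
    have hr : ∑ m : Fin (e+1), t ((k:ℤ) - (m:ℤ)) * s m
        = ∑ m ∈ Finset.range (e+1),
            (t ((k:ℤ) - (m:ℕ)) * (if (m:ℕ) = 0 then 0 else y (m - 1))) := by
      rw [← Fin.sum_univ_eq_sum_range]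
    rw [hr, Finset.sum_range_succ']
    norm_num
    -- now relate to the y-equation at row k-1
    have hk1 : (k:ℕ) - 1 < e + 1 := by omega
    have hy1 := hAy ⟨(k:ℕ) - 1, hk1⟩
    rw [if_neg (by simp; omega)] at hy1
    have hy2 : ∑ m ∈ Finset.range (e+1), t (((k:ℕ) - 1 : ℕ) - (m:ℕ)) * y m = 0 := by
      rw [← Fin.sum_univ_eq_sum_range]
      rw [← hy1]
      exact Finset.sum_congr rfl fun m _ => by rw [hAe]
    rw [Finset.sum_range_succ] at hy2
    have harg : ∀ m : ℕ, ((((k:ℕ) - 1 : ℕ) : ℤ) - (m:ℕ)) = ((k:ℤ) - (m+1 : ℕ)) := by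
      intro m; have := k.isLt; push_cast; omega
    have hsum : ∑ m ∈ Finset.range e, t ((k:ℤ) - (m+1 : ℕ)) * y m
        = ∑ m ∈ Finset.range e, t (((k:ℕ) - 1 : ℕ) - (m:ℕ)) * y m :=
      Finset.sum_congr rfl fun m _ => by rw [harg]
    have hcast : ∀ m ∈ Finset.range e, t ((k:ℤ) - ((m+1:ℕ):ℤ)) * y m
        = t ((k:ℤ) - (m+1 : ℕ)) * y m := fun m _ => rfl
    calc ∑ m ∈ Finset.range e, t ((k:ℤ) - ((m+1:ℕ):ℤ)) * y m
        = ∑ m ∈ Finset.range e, t (((k:ℕ) - 1 : ℕ) - (m:ℕ)) * y m := by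
          rw [Finset.sum_congr rfl hcast, hsum]
      _ = -(t (((k:ℕ) - 1 : ℕ) - (e:ℕ)) * y e) := by linear_combination hy2
      _ = -(x 0 * v k) := by
          have : (((k:ℕ) - 1 : ℕ) : ℤ) - (e:ℕ) = (k:ℤ) - (e+1) := by
            have := k.isLt; push_cast; omega
          rw [this]
          have : y e = y ((e+1) - 1) := by norm_num
          rw [this, hyx, hvdef]
          ring
  -- the fundamental formula for g
  set c : ℂ := (A *ᵥ s) z + x 0 * v z with hcdef
  have hAsw : A *ᵥ s = fun k : Fin (e+1) => c * (if (k:ℕ) = 0 then 1 else 0) - x 0 * v k := by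
    funext k
    rcases Nat.eq_zero_or_pos (k : ℕ) with h0 | h0
    · have : k = z := Fin.ext (by rw [hzdef]; exact h0)
      subst this
      rw [if_pos rfl, hcdef]
      ring
    · rw [hAs k h0, if_neg (by omega)]
      ring
  have hg : ∀ i : Fin (e+1), x 0 * g i = c * x (i:ℕ) - s i := by
    intro i
    have h1 : B *ᵥ (A *ᵥ s) = s := by
      rw [Matrix.mulVec_mulVec, hBA, Matrix.one_mulVec]
    have h2 := congrFun h1 i
    rw [hAsw] at h2
    have h3 : (B *ᵥ fun k : Fin (e+1) => c * (if (k:ℕ) = 0 then 1 else 0) - x 0 * v k) i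
        = c * (∑ k : Fin (e+1), B i k * (if (k:ℕ) = 0 then 1 else 0)) - x 0 * g i := by
      simp only [Matrix.mulVec, dotProduct, hgapp, Finset.mul_sum, ← Finset.sum_sub_distrib]
      exact Finset.sum_congr rfl fun k _ => by ring
    have h4 : ∑ k : Fin (e+1), B i k * (if (k:ℕ) = 0 then 1 else 0) = x (i:ℕ) := by
      rw [Finset.sum_eq_single z]
      · rw [if_pos rfl, mul_one, hX]
      · intro k _ hk
        rw [if_neg (show ¬ ((k:ℕ) = 0) from fun hc => hk (Fin.ext (by rw [hzdef]; exact hc))), mul_zero]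
      · intro h; exact absurd (Finset.mem_univ z) h
    rw [h3, h4] at h2
    linear_combination -h2
  -- the shift matrix and the displacement identity
  set Z : Matrix (Fin (e+1)) (Fin (e+1)) ℂ :=
    Matrix.of (fun i j : Fin (e+1) => if (i:ℕ) = (j:ℕ)+1 then (1:ℂ) else 0) with hZdef
  set u : Fin (e+1) → ℂ := fun k => t (-1 - (k:ℤ)) with hudef
  set E0 : Fin (e+1) → ℂ := fun k => if (k:ℕ) = 0 then (1:ℂ) else 0 with hE0def
  set El : Fin (e+1) → ℂ := fun k => if (k:ℕ) = e then (1:ℂ) else 0 with hEldef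
  have hAZ : ∀ i j : Fin (e+1), (A * Z) i j
      = if (j:ℕ) < e then t ((i:ℤ) - (j:ℤ) - 1) else 0 := by
    intro i j
    rw [Matrix.mul_apply]
    by_cases hj : (j:ℕ) < e
    · rw [if_pos hj, Finset.sum_eq_single (⟨(j:ℕ)+1, by omega⟩ : Fin (e+1))]
      · rw [hAe]
        simp only [hZdef, Matrix.of_apply, if_pos rfl, mul_one]
        congr 1
        push_cast
        ring
      · intro k _ hk
        have : ¬ ((k:ℕ) = (j:ℕ)+1) := fun hc => hk (Fin.ext hc)
        simp only [hZdef, Matrix.of_apply, if_neg this, mul_zero]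
      · intro h; exact absurd (Finset.mem_univ _) h
    · rw [if_neg hj, Finset.sum_eq_zero]
      intro k _
      have hk := k.isLt
      have : ¬ ((k:ℕ) = (j:ℕ)+1) := by omega
      simp only [hZdef, Matrix.of_apply, if_neg this, mul_zero]
  have hZA : ∀ i j : Fin (e+1), (Z * A) i j
      = if 0 < (i:ℕ) then t ((i:ℤ) - (j:ℤ) - 1) else 0 := by
    intro i j
    rw [Matrix.mul_apply]
    by_cases hi : 0 < (i:ℕ)
    · rw [if_pos hi, Finset.sum_eq_single (⟨(i:ℕ)-1, by omega⟩ : Fin (e+1))]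
      · rw [hAe]
        have hc : (i:ℕ) = ((i:ℕ)-1)+1 := by omega
        simp only [hZdef, Matrix.of_apply, if_pos hc, one_mul]
        congr 1
        have := i.isLt
        omega
      · intro k _ hk
        have : ¬ ((i:ℕ) = (k:ℕ)+1) := by
          intro hc
          exact hk (Fin.ext (show (k:ℕ) = (i:ℕ)-1 by omega))
        simp only [hZdef, Matrix.of_apply, if_neg this, zero_mul]
      · intro h; exact absurd (Finset.mem_univ _) h
    · rw [if_neg hi, Finset.sum_eq_zero]
      intro k _
      have : ¬ ((i:ℕ) = (k:ℕ)+1) := by omega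
      simp only [hZdef, Matrix.of_apply, if_neg this, zero_mul]
  have hE : A * Z - Z * A = vecMulVec E0 u - vecMulVec v El := by
    ext i j
    rw [Matrix.sub_apply, Matrix.sub_apply, hAZ, hZA,
      Matrix.vecMulVec_apply, Matrix.vecMulVec_apply]
    have hiv := i.isLt
    have hjv := j.isLt
    by_cases hi : 0 < (i:ℕ) <;> by_cases hj : (j:ℕ) < e
    · rw [if_pos hj, if_pos hi]
      simp only [hE0def, hEldef, if_neg (by omega : ¬ (i:ℕ) = 0),
        if_neg (by omega : ¬ (j:ℕ) = e), zero_mul, mul_zero]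
      ring
    · rw [if_neg hj, if_pos hi]
      simp only [hE0def, hEldef, if_neg (by omega : ¬ (i:ℕ) = 0),
        if_pos (by omega : (j:ℕ) = e), zero_mul, mul_one, hvdef]
      rw [zero_sub, zero_sub]
      congr 2
      omega
    · rw [if_pos hj, if_neg (by omega : ¬ 0 < (i:ℕ))]
      simp only [hE0def, hEldef, if_pos (by omega : (i:ℕ) = 0),
        if_neg (by omega : ¬ (j:ℕ) = e), one_mul, mul_zero, hudef]
      rw [sub_zero, sub_zero]
      congr 1
      omega
    · rw [if_neg hj, if_neg (by omega : ¬ 0 < (i:ℕ))]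
      simp only [hE0def, hEldef, if_pos (by omega : (i:ℕ) = 0),
        if_pos (by omega : (j:ℕ) = e), one_mul, mul_one, hudef, hvdef]
      rw [sub_self]
      symm
      rw [sub_eq_zero]
      congr 1
      omega
  have hZBBZ : Z * B - B * Z = vecMulVec (B *ᵥ E0) (u ᵥ* B) - vecMulVec g (El ᵥ* B) := by
    have h2 : B * (A * Z - Z * A) * B = Z * B - B * Z := by
      rw [mul_sub, sub_mul, ← mul_assoc B A Z, hBA, one_mul,
        ← mul_assoc B Z A, mul_assoc (B*Z) A B, hAB, mul_one]
    rw [← h2, hE, mul_sub, sub_mul, gs_mul_vecMulVec, gs_mul_vecMulVec,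
      gs_vecMulVec_mul, gs_vecMulVec_mul, hgdef]
  have hBvE0 : ∀ i : Fin (e+1), (B *ᵥ E0) i = x (i:ℕ) := by
    intro i
    simp only [Matrix.mulVec, dotProduct, hE0def]
    rw [Finset.sum_eq_single z]
    · rw [if_pos rfl, mul_one, hX]
    · intro k _ hk
      rw [if_neg, mul_zero]
      intro hc
      exact hk (Fin.ext (by rw [hzdef]; exact hc))
    · intro h; exact absurd (Finset.mem_univ z) h
  have huB : ∀ j : Fin (e+1), (u ᵥ* B) j = g j.rev := by
    intro j
    simp only [Matrix.vecMul, dotProduct]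
    have h1 : ∀ k : Fin (e+1), u k * B k j = u k * B j.rev k.rev := by
      intro k; rw [← hper]
    rw [Finset.sum_congr rfl fun k _ => h1 k]
    have h2 : ∀ k : Fin (e+1), u k.rev * B j.rev k = B j.rev k * v k := by
      intro k
      have hkv := k.isLt
      have : u k.rev = v k := by
        simp only [hudef, hvdef, Fin.val_rev]
        congr 1
        omega
      rw [this]; ring
    calc ∑ k : Fin (e+1), u k * B j.rev k.rev
        = ∑ k : Fin (e+1), u (Fin.revPerm k).rev * B j.rev (Fin.revPerm k).rev.rev := by
          refine Finset.sum_congr rfl fun k _ => ?_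
          simp [Fin.rev_rev]
      _ = ∑ k : Fin (e+1), u k.rev * B j.rev k.rev.rev :=
          Equiv.sum_comp Fin.revPerm (fun k => u k.rev * B j.rev k.rev.rev)
      _ = ∑ k : Fin (e+1), B j.rev k * v k := by
          refine Finset.sum_congr rfl fun k _ => ?_
          rw [Fin.rev_rev]
          exact h2 k
      _ = g j.rev := (hgapp j.rev).symm
  have hElB : ∀ j : Fin (e+1), (El ᵥ* B) j = x (e - (j:ℕ)) := by
    intro j
    simp only [Matrix.vecMul, dotProduct, hEldef]
    rw [Finset.sum_eq_single l]
    · rw [if_pos (show (l:ℕ) = e by simp [hldef]), one_mul, hBl]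
      congr 1 <;> omega
    · intro k _ hk
      rw [if_neg, zero_mul]
      intro hc
      exact hk (Fin.ext (show (k:ℕ) = e+1-1 by omega))
    · intro h; exact absurd (Finset.mem_univ l) h
  -- the recursion for B
  have hRB : ∀ (i j : ℕ) (hi : i + 1 < e + 1) (hj : j + 1 < e + 1),
      x 0 * B ⟨i+1, hi⟩ ⟨j+1, hj⟩
        = x 0 * B ⟨i, by omega⟩ ⟨j, by omega⟩ + x (i+1) * y (e - j - 1) - y i * x (e - j) := by
    intro i j hi hj
    have hentry := congrFun (congrFun hZBBZ ⟨i+1, hi⟩) ⟨j, by omega⟩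
    have hZB : (Z * B) ⟨i+1, hi⟩ ⟨j, by omega⟩ = B ⟨i, by omega⟩ ⟨j, by omega⟩ := by
      rw [Matrix.mul_apply, Finset.sum_eq_single (⟨i, by omega⟩ : Fin (e+1))]
      · simp only [hZdef, Matrix.of_apply]
        rw [if_pos trivial, one_mul]
      · intro k _ hk
        have hc' : ¬ (((⟨i+1, hi⟩ : Fin (e+1)) : ℕ) = (k:ℕ) + 1) := by
          intro hc
          have hc2 : i + 1 = (k:ℕ) + 1 := hc
          exact hk (Fin.ext (show (k:ℕ) = i by omega))
        simp only [hZdef, Matrix.of_apply, if_neg hc', zero_mul]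
      · intro h; exact absurd (Finset.mem_univ _) h
    have hBZ : (B * Z) ⟨i+1, hi⟩ ⟨j, by omega⟩ = B ⟨i+1, hi⟩ ⟨j+1, hj⟩ := by
      rw [Matrix.mul_apply, Finset.sum_eq_single (⟨j+1, hj⟩ : Fin (e+1))]
      · simp only [hZdef, Matrix.of_apply]
        rw [if_pos trivial, mul_one]
      · intro k _ hk
        have hc' : ¬ ((k:ℕ) = ((⟨j, by omega⟩ : Fin (e+1)) : ℕ) + 1) := by
          intro hc
          have hc2 : (k:ℕ) = j + 1 := hc
          exact hk (Fin.ext hc2)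
        simp only [hZdef, Matrix.of_apply, if_neg hc', mul_zero]
      · intro h; exact absurd (Finset.mem_univ _) h
    rw [Matrix.sub_apply] at hentry
    rw [hZB] at hentry
    rw [hBZ] at hentry
    rw [Matrix.sub_apply] at hentry
    rw [Matrix.vecMulVec_apply, Matrix.vecMulVec_apply] at hentry
    rw [hBvE0 ⟨i+1, hi⟩] at hentry
    rw [huB ⟨j, by omega⟩] at hentry
    rw [hElB ⟨j, by omega⟩] at hentry
    have hrevj : ((⟨j, by omega⟩ : Fin (e+1)).rev : ℕ) = e - j := by
      simp only [Fin.val_rev]; omega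
    have hg1 := hg (⟨j, by omega⟩ : Fin (e+1)).rev
    rw [hrevj] at hg1
    have hs1 : s (⟨j, by omega⟩ : Fin (e+1)).rev = y (e - j - 1) := by
      simp only [hsdef, hrevj]
      rw [if_neg (by omega)]
    rw [hs1] at hg1
    have hg2 := hg (⟨i+1, hi⟩ : Fin (e+1))
    have hs2 : s (⟨i+1, hi⟩ : Fin (e+1)) = y i := by
      simp only [hsdef]
      norm_num
    rw [hs2] at hg2
    simp only [Fin.val_mk] at hentry hg1 hg2
    linear_combination (-(x 0)) * hentry - x (i+1) * hg1 + x (e-j) * hg2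
  -- the four structured matrices
  set Lx : Matrix (Fin (e+1)) (Fin (e+1)) ℂ := Matrix.of fun i j : Fin (e+1) =>
      if (j : ℕ) ≤ (i : ℕ) then x ((i : ℕ) - (j : ℕ)) else 0 with hLxdef
  set Uy : Matrix (Fin (e+1)) (Fin (e+1)) ℂ := Matrix.of fun i j : Fin (e+1) =>
      if (i : ℕ) ≤ (j : ℕ) then y (e + 1 - 1 - ((j : ℕ) - (i : ℕ))) else 0 with hUydef
  set Ly : Matrix (Fin (e+1)) (Fin (e+1)) ℂ := Matrix.of fun i j : Fin (e+1) =>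
      if (j : ℕ) < (i : ℕ) then y ((i : ℕ) - (j : ℕ) - 1) else 0 with hLydef
  set Ux : Matrix (Fin (e+1)) (Fin (e+1)) ℂ := Matrix.of fun i j : Fin (e+1) =>
      if (i : ℕ) < (j : ℕ) then x (e + 1 - ((j : ℕ) - (i : ℕ))) else 0 with hUxdef
  have hLU0 : ∀ jf : Fin (e+1), (Lx * Uy) z jf = x 0 * y (e - (jf:ℕ)) := by
    intro jf
    rw [Matrix.mul_apply, Finset.sum_eq_single z]
    · simp only [hLxdef, hUydef, Matrix.of_apply, hzdef, Fin.val_mk]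
      rw [if_pos (le_refl 0), if_pos (Nat.zero_le _)]
      congr 1 <;> omega
    · intro k _ hk
      have : ¬ ((k:ℕ) ≤ (z:ℕ)) := by
        have : (k:ℕ) ≠ 0 := fun hc => hk (Fin.ext (show (k:ℕ) = 0 from hc))
        simp only [hzdef]
        omega
      simp only [hLxdef, Matrix.of_apply, if_neg this, zero_mul]
    · intro h; exact absurd (Finset.mem_univ _) h
  have hLyUx0 : ∀ jf : Fin (e+1), (Ly * Ux) z jf = 0 := by
    intro jf
    rw [Matrix.mul_apply, Finset.sum_eq_zero]
    intro k _
    have : ¬ ((k:ℕ) < (z:ℕ)) := by simp [hzdef]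
    simp only [hLydef, Matrix.of_apply, if_neg this, zero_mul]
  have hLUj0 : ∀ if_ : Fin (e+1), (Lx * Uy) if_ z = x (if_:ℕ) * y e := by
    intro if_
    rw [Matrix.mul_apply, Finset.sum_eq_single z]
    · simp only [hLxdef, hUydef, Matrix.of_apply, hzdef, Fin.val_mk]
      rw [if_pos (Nat.zero_le _), if_pos (le_refl 0)]
      congr 2 <;> omega
    · intro k _ hk
      have : ¬ ((k:ℕ) ≤ (z:ℕ)) := by
        have : (k:ℕ) ≠ 0 := fun hc => hk (Fin.ext (show (k:ℕ) = 0 from hc))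
        simp only [hzdef]
        omega
      simp only [hUydef, Matrix.of_apply, if_neg this, mul_zero]
    · intro h; exact absurd (Finset.mem_univ _) h
  have hLyUxj0 : ∀ if_ : Fin (e+1), (Ly * Ux) if_ z = 0 := by
    intro if_
    rw [Matrix.mul_apply, Finset.sum_eq_zero]
    intro k _
    have : ¬ ((z:ℕ) < (k:ℕ)) ∨ True := Or.inr trivial
    have h2 : ¬ ((k:ℕ) < (z:ℕ)) ∨ True := Or.inr trivial
    have h3 : ¬ ((z:ℕ) < (z:ℕ)) := lt_irrefl _
    have h4 : ¬ ((k:ℕ) < (z:ℕ)) := by simp [hzdef]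
    simp only [hUxdef, Matrix.of_apply, hzdef, Fin.val_mk]
    rw [if_neg (by omega), mul_zero]
  have hLUrec : ∀ (i j : ℕ) (hi : i + 1 < e + 1) (hj : j + 1 < e + 1),
      (Lx * Uy) ⟨i+1, hi⟩ ⟨j+1, hj⟩
        = (Lx * Uy) ⟨i, by omega⟩ ⟨j, by omega⟩ + x (i+1) * y (e - j - 1) := by
    intro i j hi hj
    rw [Matrix.mul_apply, Matrix.mul_apply]
    simp only [hLxdef, hUydef, Matrix.of_apply, Fin.val_mk]
    rw [Fin.sum_univ_eq_sum_range (fun m =>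
      (if m ≤ i+1 then x (i+1-m) else 0) * (if m ≤ j+1 then y (e+1-1-(j+1-m)) else 0)) (e+1)]
    rw [Fin.sum_univ_eq_sum_range (fun m =>
      (if m ≤ i then x (i-m) else 0) * (if m ≤ j then y (e+1-1-(j-m)) else 0)) (e+1)]
    rw [Finset.sum_range_succ', Finset.sum_range_succ]
    have h1 : ∀ m, (if m+1 ≤ i+1 then x (i+1-(m+1)) else 0) * (if m+1 ≤ j+1 then y (e+1-1-(j+1-(m+1))) else 0)
        = (if m ≤ i then x (i-m) else 0) * (if m ≤ j then y (e+1-1-(j-m)) else 0) := by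
      intro m
      simp only [Nat.add_sub_add_right, Nat.add_le_add_iff_right]
    rw [Finset.sum_congr rfl fun m _ => h1 m]
    rw [if_neg (show ¬ (e ≤ i) by omega), zero_mul, add_zero]
    rw [if_pos (Nat.zero_le _), if_pos (Nat.zero_le _)]
    congr 2 <;> omega
  have hLyUxrec : ∀ (i j : ℕ) (hi : i + 1 < e + 1) (hj : j + 1 < e + 1),
      (Ly * Ux) ⟨i+1, hi⟩ ⟨j+1, hj⟩
        = (Ly * Ux) ⟨i, by omega⟩ ⟨j, by omega⟩ + y i * x (e - j) := by
    intro i j hi hj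
    rw [Matrix.mul_apply, Matrix.mul_apply]
    simp only [hLydef, hUxdef, Matrix.of_apply, Fin.val_mk]
    rw [Fin.sum_univ_eq_sum_range (fun m =>
      (if m < i+1 then y (i+1-m-1) else 0) * (if m < j+1 then x (e+1-(j+1-m)) else 0)) (e+1)]
    rw [Fin.sum_univ_eq_sum_range (fun m =>
      (if m < i then y (i-m-1) else 0) * (if m < j then x (e+1-(j-m)) else 0)) (e+1)]
    rw [Finset.sum_range_succ', Finset.sum_range_succ]
    have h1 : ∀ m, (if m+1 < i+1 then y (i+1-(m+1)-1) else 0) * (if m+1 < j+1 then x (e+1-(j+1-(m+1))) else 0)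
        = (if m < i then y (i-m-1) else 0) * (if m < j then x (e+1-(j-m)) else 0) := by
      intro m
      simp only [Nat.add_sub_add_right, Nat.add_lt_add_iff_right]
    rw [Finset.sum_congr rfl fun m _ => h1 m]
    rw [if_neg (show ¬ (e < i) by omega), zero_mul, add_zero]
    rw [if_pos (Nat.succ_pos i), if_pos (Nat.succ_pos j)]
    have e1 : i + 1 - 0 - 1 = i := by omega
    have e2 : e + 1 - (j + 1 - 0) = e - j := by omega
    rw [e1, e2]
  -- conclusion by double induction
  have hye : y e = x 0 := by
    have := hyx
    rwa [Nat.add_sub_cancel] at this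
  have main : ∀ (n : ℕ) (i j : Fin (e+1)), (i:ℕ) ≤ n →
      x 0 * B i j = (Lx * Uy) i j - (Ly * Ux) i j := by
    intro n
    induction n with
    | zero =>
      intro i j hi
      have hiz : i = z := Fin.ext (show (i:ℕ) = 0 by omega)
      subst hiz
      rw [hB0, hLU0, hLyUx0, Nat.add_sub_cancel]
      ring
    | succ n ih =>
      intro i j hi
      by_cases hi0 : (i:ℕ) = 0
      · have hiz : i = z := Fin.ext (show (i:ℕ) = 0 from hi0)
        subst hiz
        rw [hB0, hLU0, hLyUx0, Nat.add_sub_cancel]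
        ring
      by_cases hj0 : (j:ℕ) = 0
      · have hjz : j = z := Fin.ext (show (j:ℕ) = 0 from hj0)
        subst hjz
        rw [hX, hLUj0, hLyUxj0, hye]
        ring
      · have hiv := i.isLt
        have hjv := j.isLt
        have hi1 : ((i:ℕ)-1) + 1 < e + 1 := by omega
        have hj1 : ((j:ℕ)-1) + 1 < e + 1 := by omega
        have hieq : i = ⟨((i:ℕ)-1)+1, hi1⟩ := Fin.ext (show (i:ℕ) = ((i:ℕ)-1)+1 by omega)
        have hjeq : j = ⟨((j:ℕ)-1)+1, hj1⟩ := Fin.ext (show (j:ℕ) = ((j:ℕ)-1)+1 by omega)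
        rw [hieq, hjeq, hRB _ _ hi1 hj1, hLUrec _ _ hi1 hj1, hLyUxrec _ _ hi1 hj1]
        have hih := ih ⟨(i:ℕ)-1, by omega⟩ ⟨(j:ℕ)-1, by omega⟩ (show ((i:ℕ)-1) ≤ n by omega)
        linear_combination hih
  rw [eq_inv_smul_iff₀ hx0]
  ext i j
  simp only [Matrix.smul_apply, Matrix.sub_apply, smul_eq_mul]
  exact main (i:ℕ) i j (le_refl _)
end

section
/- Let 𝒯_d = (t_{i−j})_{0≤i,j≤d−1} be a Toeplitz matrix over ℂ with det(𝒯_{d−1}) = 0 and det(𝒯_d) ≠ 0, where 𝒯_{d−1} is its leading principal submatrix of order d−1. For γ, δ ∈ ℂ, let 𝒯_{d+1} be the (d+1)×(d+1) matrix obtained by bordering 𝒯_d with last column (γ, t_{−d+1}, …, t_{−1}, t_0)ᵗ and last row (δ, t_{d−1}, …, t_1, t_0). Define the column vectors of dimension d: V_− = (0, t_{−d+1}, …, t_{−1})ᵗ, V_+ = (0, t_{d−1}, …, t_1)ᵗ and e_0 = (1, 0, …, 0)ᵗ. Then det(𝒯_{d+1}) = −det(𝒯_d)·(γ·V_+ᵗ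 𝒯_d^{−1} e_0 + δ·e_0ᵗ 𝒯_d^{−1} V_− + V_+ᵗ 𝒯_d^{−1} V_− − t_0). Furthermore, the coefficients V_+ᵗ 𝒯_d^{−1} e_0 of γ and e_0ᵗ 𝒯_d^{−1} V_− of δ are both nonzero. -/
/-- The bordered Toeplitz matrix `𝒯_{d+1}` with last column `(γ, t_{-d+1}, …, t_{-1}, t_0)ᵗ`
and last row `(δ, t_{d-1}, …, t_1, t_0)`. -/
noncomputable def borderedToeplitz (d : ℕ) (t : ℤ → ℂ) (γ δ : ℂ) :
    Matrix (Fin (d + 1)) (Fin (d + 1)) ℂ :=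
  Matrix.of fun i j =>
    if (i : ℕ) = d then (if (j : ℕ) = 0 then δ else t ((d : ℤ) - (j : ℤ)))
    else if (j : ℕ) = d then (if (i : ℕ) = 0 then γ else t ((i : ℤ) - (d : ℤ)))
    else t ((i : ℤ) - (j : ℤ))

open Matrix

/-! Expanding along the border (Schur complement of `𝒯_d`) gives
`det 𝒯_{d+1} = det 𝒯_d · (t₀ - (δ e₀ + V₊)ᵗ 𝒯_d⁻¹ (γ e₀ + V₋))`, and the `γδ` term drops out because
`(𝒯_d⁻¹)₀₀ = det 𝒯_{d-1} / det 𝒯_d = 0`: deleting the first row and column of a Toeplitz matrix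
leaves `𝒯_{d-1}`.

For the coefficient of `γ`, the vector `x = 𝒯_d⁻¹ e₀` has `x₀ = 0`, so by the Toeplitz structure its
upward shift `y` satisfies `𝒯_d y = (0, …, 0, V₊ᵗ x)`. If `V₊ᵗ x = 0` then `y = 0`, hence `x = 0`,
which contradicts `𝒯_d x = e₀`. The coefficient of `δ` is the same quantity for the transposed
Toeplitz matrix `(t_{-k})`. -/

namespace Matrix

variable {R : Type*} [CommRing R] {n : ℕ}

theorem det_succ_eq_det_mul_schur (M : Matrix (Fin (n + 1)) (Fin (n + 1)) R)
    (hA : IsUnit (M.submatrix Fin.castSucc Fin.castSucc).det) :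
    M.det = (M.submatrix Fin.castSucc Fin.castSucc).det *
      (M (Fin.last n) (Fin.last n) - (fun j => M (Fin.last n) j.castSucc) ⬝ᵥ
        ((M.submatrix Fin.castSucc Fin.castSucc)⁻¹ *ᵥ fun i => M i.castSucc (Fin.last n))) := by
  set A := M.submatrix Fin.castSucc Fin.castSucc
  have := A.invertibleOfIsUnitDet hA
  have hblocks : M.submatrix finSumFinEquiv finSumFinEquiv =
      fromBlocks A (of fun i (_ : Fin 1) => M i.castSucc (Fin.last n))
        (of fun (_ : Fin 1) j => M (Fin.last n) j.castSucc)
        (of fun _ _ => M (Fin.last n) (Fin.last n)) := by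
    ext (i | i) (j | j) <;> simp [A, Fin.fin_one_eq_zero] <;> rfl
  rw [← det_submatrix_equiv_self finSumFinEquiv, hblocks, det_fromBlocks₁₁, det_fin_one,
    invOf_eq_nonsing_inv, sub_apply, Matrix.mul_assoc]
  rfl

theorem inv_apply_zero_zero (M : Matrix (Fin (n + 1)) (Fin (n + 1)) R) :
    M⁻¹ 0 0 = Ring.inverse M.det * (M.submatrix Fin.succ Fin.succ).det := by
  rw [inv_def, smul_apply, adjugate_fin_succ_eq_det_submatrix]
  simp

end Matrix

theorem Fin.ite_val_eq_zero_eq_single {M : Type*} [Zero M] (n : ℕ) (a : M) :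
    (fun i : Fin (n + 1) => if (i : ℕ) = 0 then a else 0) = Pi.single 0 a := by
  ext i
  simp [Pi.single_apply, Fin.val_eq_zero_iff]

section Toeplitz

variable {n : ℕ} {t : ℤ → ℂ}

theorem toeplitz_submatrix_succ (n : ℕ) (t : ℤ → ℂ) :
    (toeplitz (n + 1) t).submatrix Fin.succ Fin.succ = toeplitz n t := by
  ext i j
  simp [toeplitz]

theorem toeplitz_transpose (d : ℕ) (t : ℤ → ℂ) :
    (toeplitz d t)ᵀ = toeplitz d (fun k => t (-k)) := by
  ext i j
  simp [toeplitz]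

theorem inv_toeplitz_zero_zero (h : (toeplitz n t).det = 0) :
    (toeplitz (n + 1) t)⁻¹ 0 0 = 0 := by
  rw [inv_apply_zero_zero, toeplitz_submatrix_succ, h, mul_zero]

def vPlus (d : ℕ) (t : ℤ → ℂ) : Fin d → ℂ := fun i => if (i : ℕ) = 0 then 0 else t (d - i)

def vMinus (d : ℕ) (t : ℤ → ℂ) : Fin d → ℂ := fun i => if (i : ℕ) = 0 then 0 else t (i - d)

theorem vMinus_eq_vPlus_neg (d : ℕ) (t : ℤ → ℂ) : vMinus d t = vPlus d (fun k => t (-k)) := by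
  ext i
  simp [vMinus, vPlus]

theorem borderedToeplitz_submatrix_castSucc (d : ℕ) (t : ℤ → ℂ) (γ δ : ℂ) :
    (borderedToeplitz d t γ δ).submatrix Fin.castSucc Fin.castSucc = toeplitz d t := by
  ext i j
  simp [borderedToeplitz, toeplitz, i.isLt.ne, j.isLt.ne]

theorem borderedToeplitz_last_row (n : ℕ) (t : ℤ → ℂ) (γ δ : ℂ) :
    (fun j => borderedToeplitz (n + 1) t γ δ (Fin.last _) (Fin.castSucc j)) =
      δ • Pi.single 0 1 + vPlus (n + 1) t := by
  ext j
  rcases eq_or_ne j 0 with rfl | hj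
  · simp [borderedToeplitz, vPlus]
  · simp [borderedToeplitz, vPlus, hj]

theorem borderedToeplitz_last_col (n : ℕ) (t : ℤ → ℂ) (γ δ : ℂ) :
    (fun i => borderedToeplitz (n + 1) t γ δ (Fin.castSucc i) (Fin.last _)) =
      γ • Pi.single 0 1 + vMinus (n + 1) t := by
  ext i
  rcases eq_or_ne i 0 with rfl | hi
  · simp [borderedToeplitz, vMinus]
  · simp [borderedToeplitz, vMinus, hi, i.isLt.ne]

theorem det_borderedToeplitz (γ δ : ℂ) (h1 : (toeplitz n t).det = 0)
    (h2 : (toeplitz (n + 1) t).det ≠ 0) :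
    (borderedToeplitz (n + 1) t γ δ).det =
      -(toeplitz (n + 1) t).det *
        (γ * (vPlus (n + 1) t ⬝ᵥ ((toeplitz (n + 1) t)⁻¹ *ᵥ Pi.single 0 1)) +
          δ * (Pi.single 0 1 ⬝ᵥ ((toeplitz (n + 1) t)⁻¹ *ᵥ vMinus (n + 1) t)) +
          vPlus (n + 1) t ⬝ᵥ ((toeplitz (n + 1) t)⁻¹ *ᵥ vMinus (n + 1) t) - t 0) := by
  have hcorner : borderedToeplitz (n + 1) t γ δ (Fin.last _) (Fin.last _) = t 0 := by
    simp [borderedToeplitz]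
  have h00 : Pi.single 0 1 ⬝ᵥ ((toeplitz (n + 1) t)⁻¹ *ᵥ Pi.single 0 1) = 0 := by
    rw [mulVec_single_one, single_one_dotProduct]
    exact inv_toeplitz_zero_zero h1
  rw [det_succ_eq_det_mul_schur, borderedToeplitz_submatrix_castSucc, borderedToeplitz_last_row,
    borderedToeplitz_last_col, hcorner]
  · simp only [mulVec_add, mulVec_smul, add_dotProduct, dotProduct_add, smul_dotProduct,
      dotProduct_smul, h00, smul_eq_mul]
    ring
  · rw [borderedToeplitz_submatrix_castSucc]
    exact h2.isUnit

theorem toeplitz_mulVec_snoc_tail (x : Fin (n + 1) → ℂ) (hx : x 0 = 0) :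
    toeplitz (n + 1) t *ᵥ Fin.snoc (Fin.tail x) 0 =
      Fin.snoc (Fin.tail (toeplitz (n + 1) t *ᵥ x)) (vPlus (n + 1) t ⬝ᵥ x) := by
  ext i
  refine Fin.lastCases ?_ (fun i => ?_) i
  · rw [Fin.snoc_last, mulVec, dotProduct, dotProduct, Fin.sum_univ_castSucc, Fin.sum_univ_succ]
    simp only [Fin.snoc_castSucc, Fin.snoc_last, Fin.tail, mul_zero, add_zero, hx, zero_add,
      vPlus, toeplitz, of_apply]
    refine Finset.sum_congr rfl fun j _ => ?_
    simp only [Fin.val_succ, Nat.succ_ne_zero, if_false, Fin.val_castSucc, Fin.val_last]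
    push_cast
    ring_nf
  · rw [Fin.snoc_castSucc, Fin.tail, mulVec, mulVec, dotProduct, dotProduct, Fin.sum_univ_castSucc,
      Fin.sum_univ_succ]
    simp only [Fin.snoc_castSucc, Fin.snoc_last, Fin.tail, mul_zero, add_zero, hx, zero_add,
      toeplitz, of_apply]
    refine Finset.sum_congr rfl fun j _ => ?_
    simp only [Fin.val_succ, Fin.val_castSucc]
    push_cast
    ring_nf

theorem vPlus_dotProduct_inv_mulVec_single_ne_zero (h1 : (toeplitz n t).det = 0)
    (h2 : (toeplitz (n + 1) t).det ≠ 0) :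
    vPlus (n + 1) t ⬝ᵥ ((toeplitz (n + 1) t)⁻¹ *ᵥ Pi.single 0 1) ≠ 0 := by
  set x := (toeplitz (n + 1) t)⁻¹ *ᵥ Pi.single 0 1
  have hTx : toeplitz (n + 1) t *ᵥ x = Pi.single 0 1 := by
    rw [mulVec_mulVec, mul_nonsing_inv _ h2.isUnit, one_mulVec]
  have hx0 : x 0 = 0 := by
    simpa [x, mulVec_single_one] using inv_toeplitz_zero_zero h1
  intro hc
  have hker : toeplitz (n + 1) t *ᵥ Fin.snoc (Fin.tail x) 0 = 0 := by
    rw [toeplitz_mulVec_snoc_tail x hx0, hTx, hc]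
    ext i
    refine Fin.lastCases ?_ (fun i => ?_) i <;> simp [Fin.tail]
  have htail : Fin.tail x = 0 := by
    ext i
    simpa using congrFun (eq_zero_of_mulVec_eq_zero h2 hker) i.castSucc
  have hx : x = 0 := by
    rw [← Fin.cons_self_tail x, hx0, htail]
    ext i
    refine Fin.cases ?_ (fun i => ?_) i <;> simp
  simpa [hx] using congrFun hTx 0

theorem single_dotProduct_inv_mulVec_vMinus_ne_zero (h1 : (toeplitz n t).det = 0)
    (h2 : (toeplitz (n + 1) t).det ≠ 0) :
    Pi.single 0 1 ⬝ᵥ ((toeplitz (n + 1) t)⁻¹ *ᵥ vMinus (n + 1) t) ≠ 0 := by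
  rw [dotProduct_mulVec, ← mulVec_transpose, dotProduct_comm, transpose_nonsing_inv,
    toeplitz_transpose, vMinus_eq_vPlus_neg]
  refine vPlus_dotProduct_inv_mulVec_single_ne_zero ?_ ?_ <;>
    rwa [← toeplitz_transpose, det_transpose]

end Toeplitz

/-- Determinant of the bordered Toeplitz matrix: if `det 𝒯_{d-1} = 0` and `det 𝒯_d ≠ 0`, then
`det 𝒯_{d+1} = -det 𝒯_d · (γ·V_+ᵗ𝒯_d⁻¹e_0 + δ·e_0ᵗ𝒯_d⁻¹V_- + V_+ᵗ𝒯_d⁻¹V_- - t_0)`, and the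
coefficients `V_+ᵗ𝒯_d⁻¹e_0` and `e_0ᵗ𝒯_d⁻¹V_-` of `γ` and `δ` are nonzero. -/
theorem bordered_toeplitz_det (d : ℕ) (t : ℤ → ℂ) (γ δ : ℂ)
    (h1 : (toeplitz (d - 1) t).det = 0) (h2 : (toeplitz d t).det ≠ 0) :
    (borderedToeplitz d t γ δ).det =
      -(toeplitz d t).det *
        (γ * ((fun i : Fin d => if (i : ℕ) = 0 then 0 else t ((d : ℤ) - (i : ℤ))) ⬝ᵥ
            ((toeplitz d t)⁻¹ *ᵥ fun i : Fin d => if (i : ℕ) = 0 then 1 else 0)) +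
          δ * ((fun i : Fin d => if (i : ℕ) = 0 then (1 : ℂ) else 0) ⬝ᵥ
            ((toeplitz d t)⁻¹ *ᵥ fun i : Fin d => if (i : ℕ) = 0 then 0 else t ((i : ℤ) - (d : ℤ)))) +
          ((fun i : Fin d => if (i : ℕ) = 0 then 0 else t ((d : ℤ) - (i : ℤ))) ⬝ᵥ
            ((toeplitz d t)⁻¹ *ᵥ fun i : Fin d => if (i : ℕ) = 0 then 0 else t ((i : ℤ) - (d : ℤ)))) -
          t 0) ∧
    ((fun i : Fin d => if (i : ℕ) = 0 then 0 else t ((d : ℤ) - (i : ℤ))) ⬝ᵥ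
        ((toeplitz d t)⁻¹ *ᵥ fun i : Fin d => if (i : ℕ) = 0 then 1 else 0)) ≠ 0 ∧
    ((fun i : Fin d => if (i : ℕ) = 0 then (1 : ℂ) else 0) ⬝ᵥ
        ((toeplitz d t)⁻¹ *ᵥ fun i : Fin d => if (i : ℕ) = 0 then 0 else t ((i : ℤ) - (d : ℤ)))) ≠ 0 := by
  cases d with
  | zero => simp at h1
  | succ n =>
    rw [Nat.add_sub_cancel] at h1
    rw [Fin.ite_val_eq_zero_eq_single]
    exact ⟨det_borderedToeplitz γ δ h1 h2, vPlus_dotProduct_inv_mulVec_single_ne_zero h1 h2,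
      single_dotProduct_inv_mulVec_vMinus_ne_zero h1 h2⟩
end
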